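/- arXiv:2101.01003 — 10 statements merged into one kernel-verified Lean document; each statement's English description precedes it below -/
import Mathlib

section
/- For every integer r ≥ 1, the identity A_{r+2}(X) = -A_{r+1}(X) - X^{q^r}·A_r(X) holds in GF(p)[X]. -/
open Polynomial

theorem stmt_0 (p k : ℕ) [Fact p.Prime] (hk : 1 ≤ k) (q : ℕ) (hq : q = p ^ k)
    (A : ℕ → Polynomial (ZMod p)) (hA1 : A 1 = 1) (hA2 : A 2 = -1)
    (hA : ∀ r : ℕ, 1 ≤ r → A (r + 2) = -(A (r + 1)) ^ q - X ^ q * A r ^ q ^ 2) :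
    ∀ r : ℕ, 1 ≤ r → A (r + 2) = -(A (r + 1)) - X ^ q ^ r * A r := by
  -- Frobenius facts
  have hsub : ∀ (m : ℕ) (x y : Polynomial (ZMod p)), (x - y) ^ q ^ m = x ^ q ^ m - y ^ q ^ m := by
    intro m x y
    rw [hq, ← pow_mul]
    exact sub_pow_char_pow x y (k * m)
  have hnegq : ∀ (m : ℕ) (x : Polynomial (ZMod p)), (-x) ^ q ^ m = -(x ^ q ^ m) := by
    intro m x
    have h := hsub m 0 x
    have h0 : (0 : Polynomial (ZMod p)) ^ q ^ m = 0 :=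
      zero_pow (by simp [hq, pow_ne_zero, (Fact.out : p.Prime).ne_zero])
    rw [zero_sub, h0, zero_sub] at h
    exact h
  have hfrob : ∀ (m : ℕ) (x y z : Polynomial (ZMod p)),
      (-x - y * z) ^ q ^ m = -(x ^ q ^ m) - y ^ q ^ m * z ^ q ^ m := by
    intro m x y z
    rw [hsub m (-x) (y * z), hnegq, mul_pow]
  have hneg1 : ∀ (m : ℕ), ((-1 : Polynomial (ZMod p))) ^ q ^ m = -1 := by
    intro m; rw [hnegq, one_pow]
  -- base case computations
  have h3 : A 3 = 1 - X ^ q := by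
    have := hA 1 le_rfl
    rw [hA1, hA2, one_pow] at this
    have h1 : ((-1 : Polynomial (ZMod p))) ^ q = -1 := by
      have := hneg1 1; rwa [pow_one] at this
    rw [this, h1]; ring
  have hG1 : A 3 = -(A 2) - X ^ q ^ 1 * A 1 := by
    rw [h3, hA1, hA2, pow_one]; ring
  have hG2 : A 4 = -(A 3) - X ^ q ^ 2 * A 2 := by
    have e := hA 2 (by norm_num)
    rw [hA2, h3] at e
    have hx : ((1 : Polynomial (ZMod p)) - X ^ q) ^ q = 1 - X ^ q ^ 2 := by
      have := hsub 1 1 (X ^ q)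
      rw [pow_one] at this
      rw [this, one_pow, ← pow_mul, ← pow_two]
    have hm1 : ((-1 : Polynomial (ZMod p))) ^ q ^ 2 = -1 := hneg1 2
    rw [hx, hm1] at e
    rw [e, h3, hA2]; ring
  -- two-step induction
  suffices h : ∀ r : ℕ, 1 ≤ r →
      (A (r + 2) = -(A (r + 1)) - X ^ q ^ r * A r ∧
       A (r + 3) = -(A (r + 2)) - X ^ q ^ (r + 1) * A (r + 1)) by
    exact fun r hr => (h r hr).1
  intro r hr
  induction r, hr using Nat.le_induction with
  | base => exact ⟨hG1, hG2⟩
  | succ n hn ih =>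
    obtain ⟨ih1, ih2⟩ := ih
    refine ⟨ih2, ?_⟩
    -- goal : A (n + 4) = -(A (n + 3)) - X ^ q ^ (n + 2) * A (n + 2)
    have e1 := hA (n + 2) (by omega)
    have e3 := hA (n + 1) (by omega)
    have e4 := hA n hn
    -- raise ih2 to the q-th power
    have f3 : (A (n + 3)) ^ q = -((A (n + 2)) ^ q) - X ^ q ^ (n + 2) * (A (n + 1)) ^ q := by
      calc (A (n + 3)) ^ q
          = (-(A (n + 2)) - X ^ q ^ (n + 1) * A (n + 1)) ^ q ^ 1 := by rw [ih2, pow_one]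
        _ = -((A (n + 2)) ^ q ^ 1) - (X ^ q ^ (n + 1)) ^ q ^ 1 * (A (n + 1)) ^ q ^ 1 :=
            hfrob 1 _ _ _
        _ = -((A (n + 2)) ^ q) - X ^ q ^ (n + 2) * (A (n + 1)) ^ q := by
            rw [pow_one, ← pow_mul, ← pow_succ]
    -- raise ih1 to the q²-th power
    have f2 : (A (n + 2)) ^ q ^ 2 = -((A (n + 1)) ^ q ^ 2) - X ^ q ^ (n + 2) * (A n) ^ q ^ 2 := by
      calc (A (n + 2)) ^ q ^ 2
          = (-(A (n + 1)) - X ^ q ^ n * A n) ^ q ^ 2 := by rw [ih1]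
        _ = -((A (n + 1)) ^ q ^ 2) - (X ^ q ^ n) ^ q ^ 2 * (A n) ^ q ^ 2 := hfrob 2 _ _ _
        _ = -((A (n + 1)) ^ q ^ 2) - X ^ q ^ (n + 2) * (A n) ^ q ^ 2 := by
            rw [← pow_mul, ← pow_add]
    have key : A (n + 1 + 2) = A (n + 3) := by norm_num
    linear_combination e1 - f3 - X ^ q * f2 + e3 + X ^ q ^ (n + 2) * e4
end

section
/- For every integer r ≥ 1, the identity A_{r+1}(X)^{q+1} - A_r(X)^q·A_{r+2}(X) = X^{q(q^r - 1)/(q - 1)} holds in GF(p)[X]. -/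
open Polynomial

theorem stmt_1 (p k : ℕ) [Fact p.Prime] (hk : 1 ≤ k) (q : ℕ) (hq : q = p ^ k)
    (A : ℕ → Polynomial (ZMod p)) (hA1 : A 1 = 1) (hA2 : A 2 = -1)
    (hA : ∀ r : ℕ, 1 ≤ r → A (r + 2) = -(A (r + 1)) ^ q - X ^ q * A r ^ q ^ 2) :
    ∀ r : ℕ, 1 ≤ r →
      A (r + 1) ^ (q + 1) - A r ^ q * A (r + 2) = X ^ (q * ((q ^ r - 1) / (q - 1))) := by
  have hq2 : 2 ≤ q := by
    have := (Fact.out : p.Prime).two_le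
    calc 2 ≤ p := this
    _ ≤ p ^ k := Nat.le_self_pow (by omega) p
    _ = q := hq.symm
  -- Frobenius on polynomials
  have hfrob : ∀ x y : Polynomial (ZMod p), (x - y) ^ q = x ^ q - y ^ q := by
    intro x y
    rw [hq]
    exact sub_pow_char_pow (p := p) x y k
  intro r hr
  induction r, hr using Nat.le_induction with
  | base =>
    have h3 := hA 1 le_rfl
    have hexp : q * ((q ^ 1 - 1) / (q - 1)) = q := by
      rw [pow_one, Nat.div_self (by omega : 0 < q - 1), mul_one]
    rw [hexp, h3, hA1, hA2]
    have hm1 : (-1 : Polynomial (ZMod p)) ^ q = (-1) ^ q := rfl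
    have : ((-1 : Polynomial (ZMod p)) ^ (q + 1)) = (-1) ^ q * (-1) := pow_succ _ _
    rw [this]
    ring
  | succ r hr IH =>
    have h2 := hA r hr
    have h3 := hA (r + 1) (by omega)
    -- exponent arithmetic
    obtain ⟨c, hc⟩ : (q - 1) ∣ q ^ r - 1 := by
      simpa using Nat.sub_dvd_pow_sub_pow q 1 r
    have h1r : 1 ≤ q ^ r := Nat.one_le_pow _ _ (by omega)
    have h1r' : 1 ≤ q ^ (r + 1) := Nat.one_le_pow _ _ (by omega)
    have hkey : q ^ (r + 1) - 1 = (q - 1) * (1 + q * c) := by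
      zify [h1r, h1r', (by omega : 1 ≤ q)] at hc ⊢
      linear_combination (q : ℤ) * hc
    have hdiv1 : (q ^ (r + 1) - 1) / (q - 1) = 1 + q * c := by
      rw [hkey, Nat.mul_div_cancel_left _ (by omega : 0 < q - 1)]
    have hdiv2 : (q ^ r - 1) / (q - 1) = c := by
      rw [hc, Nat.mul_div_cancel_left _ (by omega : 0 < q - 1)]
    rw [hdiv2] at IH
    -- main algebraic identity
    have key : A (r + 1 + 1) ^ (q + 1) - A (r + 1) ^ q * A (r + 1 + 2) =
        X ^ q * (A (r + 1) ^ (q + 1) - A r ^ q * A (r + 2)) ^ q := by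
      rw [hfrob (A (r + 1) ^ (q + 1)) (A r ^ q * A (r + 2)), h3]
      have e1 : A (r + 1 + 1) ^ (q + 1) = A (r + 2) ^ q * A (r + 2) := by
        rw [pow_succ]
      rw [e1]
      have e2 : (A (r + 1) ^ (q + 1)) ^ q = (A (r + 1) ^ q) ^ q * A (r + 1) ^ q := by
        rw [← pow_mul, ← pow_mul, ← pow_add]
        congr 1
        ring
      have e3 : (A r ^ q * A (r + 2)) ^ q = (A r ^ q) ^ q * A (r + 2) ^ q :=
        mul_pow _ _ _
      have e4 : A r ^ q ^ 2 = (A r ^ q) ^ q := by rw [← pow_mul, pow_two]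
      have e5 : A (r + 1) ^ q ^ 2 = (A (r + 1) ^ q) ^ q := by rw [← pow_mul, pow_two]
      rw [e2, e3, h2, e4, e5]
      ring
    rw [key, IH, ← pow_mul, ← pow_add, hdiv1]
    ring_nf
end

section
/- For every integer r ≥ 3, the set of zeros of A_r in the algebraic closure of GF(p) is exactly { (u - u^q)^{q^2+1} / (u - u^{q^2})^{q+1} : u ∈ GF(q^r) \ GF(q^2) }. -/
open Polynomial

set_option maxHeartbeats 1600000

private def mseq (q : ℕ) : ℕ → ℕ
  | 0 => 0
  | n+1 => mseq q n * q + (if n = 0 then 0 else q)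

private lemma mseq_one (q : ℕ) : mseq q 1 = 0 := by simp [mseq]
private lemma mseq_two (q : ℕ) : mseq q 2 = q := by simp [mseq]
private lemma mseq_rec (q n : ℕ) : mseq q (n+2) = q * mseq q (n+1) + q := by simp [mseq]; ring

private lemma key_identity (p k : ℕ) [Fact p.Prime] (q : ℕ) (hq : q = p ^ k)
    (A : ℕ → Polynomial (ZMod p)) (hA1 : A 1 = 1) (hA2 : A 2 = -1)
    (hA : ∀ r : ℕ, 1 ≤ r → A (r + 2) = -(A (r + 1)) ^ q - X ^ q * A r ^ q ^ 2)
    (u x : AlgebraicClosure (ZMod p)) (hα : u - u ^ q ≠ 0)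
    (hx : x * (u - u ^ q ^ 2) ^ (q + 1) = (u - u ^ q) ^ (q ^ 2 + 1)) :
    ∀ n : ℕ, aeval x (A (n+1)) * (u - u ^ q ^ 2) ^ (mseq q (n+1)) * (u - u ^ q) ^ q
      = (-1) ^ n * (u - u ^ q ^ (n+1)) ^ q * (u - u ^ q) ^ (mseq q (n+1)) := by
  have frob : ∀ (a b : AlgebraicClosure (ZMod p)) (j : ℕ),
      (a - b) ^ q ^ j = a ^ q ^ j - b ^ q ^ j := by
    intro a b j
    rw [hq, ← pow_mul, sub_pow_char_pow, pow_mul]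
  have frob1 : ∀ (a b : AlgebraicClosure (ZMod p)), (a - b) ^ q = a ^ q - b ^ q := by
    intro a b
    have h := frob a b 1
    rwa [pow_one] at h
  have hneg1 : ∀ m : ℕ, ((-1 : AlgebraicClosure (ZMod p)) ^ m) ^ q = (-1) ^ m := by
    intro m
    rw [pow_right_comm, hq, neg_one_pow_char_pow]
  have hneg2 : ∀ m : ℕ, ((-1 : AlgebraicClosure (ZMod p)) ^ m) ^ (q^2) = (-1) ^ m := by
    intro m
    rw [pow_right_comm, hq, show ((p^k)^2 : ℕ) = p^(k*2) from (pow_mul p k 2).symm,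
      neg_one_pow_char_pow]
  -- Frobenius expansion facts
  have f1 : (u - u^q)^(q^2) = u^(q^2) - u^(q^3) := by
    rw [frob u (u^q) 2, ← pow_mul, show q*q^2 = q^3 from by ring]
  have f2 : (u - u^q)^(q^3) = u^(q^3) - u^(q^4) := by
    rw [frob u (u^q) 3, ← pow_mul, show q*q^3 = q^4 from by ring]
  have f3 : (u - u^q^2)^(q^2) = u^(q^2) - u^(q^4) := by
    rw [frob u (u^(q^2)) 2, ← pow_mul, show q^2*q^2 = q^4 from by ring]
  have f4 : (u - u^q^2)^q = u^q - u^(q^3) := by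
    rw [frob1 u (u^(q^2)), ← pow_mul, show q^2*q = q^3 from by ring]
  have f5 : (u - u^q)^q = u^q - u^(q^2) := by
    rw [frob1 u (u^q), ← pow_mul, show q*q = q^2 from by ring]
  have main : ∀ n : ℕ,
      (aeval x (A (n+1)) * (u - u ^ q ^ 2) ^ (mseq q (n+1)) * (u - u ^ q) ^ q
        = (-1) ^ n * (u - u ^ q ^ (n+1)) ^ q * (u - u ^ q) ^ (mseq q (n+1))) ∧
      (aeval x (A (n+2)) * (u - u ^ q ^ 2) ^ (mseq q (n+2)) * (u - u ^ q) ^ q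
        = (-1) ^ (n+1) * (u - u ^ q ^ (n+2)) ^ q * (u - u ^ q) ^ (mseq q (n+2))) := by
    intro n
    induction n with
    | zero =>
      constructor
      · show aeval x (A 1) * (u - u ^ q ^ 2) ^ (mseq q 1) * (u - u ^ q) ^ q
          = (-1) ^ 0 * (u - u ^ q ^ 1) ^ q * (u - u ^ q) ^ (mseq q 1)
        rw [hA1, mseq_one, pow_one]
        simp
      · show aeval x (A 2) * (u - u ^ q ^ 2) ^ (mseq q 2) * (u - u ^ q) ^ q
          = (-1) ^ 1 * (u - u ^ q ^ 2) ^ q * (u - u ^ q) ^ (mseq q 2)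
        rw [hA2, mseq_two]
        simp only [map_neg, map_one]
        ring
    | succ n ih =>
      obtain ⟨ih1, ih2⟩ := ih
      refine ⟨ih2, ?_⟩
      show aeval x (A (n+3)) * (u - u ^ q ^ 2) ^ (mseq q (n+3)) * (u - u ^ q) ^ q
        = (-1) ^ (n+2) * (u - u ^ q ^ (n+3)) ^ q * (u - u ^ q) ^ (mseq q (n+3))
      have hm3 : mseq q (n+3) = mseq q (n+1) * q^2 + (q^2 + q) := by
        simp [mseq]; ring
      have hA3 : aeval x (A (n+3)) = -(aeval x (A (n+2)))^q - x^q * (aeval x (A (n+1)))^(q^2) := by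
        rw [show A (n+3) = -(A (n+2)) ^ q - X ^ q * A (n+1) ^ q ^ 2 from hA (n+1) (by omega)]
        simp only [map_sub, map_neg, map_pow, map_mul, aeval_X]
      -- more Frobenius facts involving n
      have g1 : ((u - u^q)^q)^q = u^(q^2) - u^(q^3) := by
        rw [← pow_mul, show q*q = q^2 from by ring, f1]
      have g2 : ((u - u^(q^(n+2)))^q)^q = u^(q^2) - u^(q^(n+4)) := by
        rw [← pow_mul, show q*q = q^2 from by ring, frob u (u^(q^(n+2))) 2, ← pow_mul,
          show q^(n+2)*q^2 = q^(n+4) from by ring]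
      have g3 : ((u - u^q^2)^(mseq q (n+2)))^q
          = ((u - u^q^2)^(mseq q (n+1)))^(q^2) * (u^(q^2) - u^(q^4)) := by
        rw [← pow_mul, mseq_rec, show (q * mseq q (n+1) + q) * q = mseq q (n+1) * q^2 + q^2 from by ring,
          pow_add, pow_mul, f3]
      have g4 : ((u - u^q)^(mseq q (n+2)))^q
          = ((u - u^q)^(mseq q (n+1)))^(q^2) * (u^(q^2) - u^(q^3)) := by
        rw [← pow_mul, mseq_rec, show (q * mseq q (n+1) + q) * q = mseq q (n+1) * q^2 + q^2 from by ring,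
          pow_add, pow_mul, f1]
      have g5 : ((u - u^q)^q)^(q^2) = u^(q^3) - u^(q^4) := by
        rw [← pow_mul, show q*q^2 = q^3 from by ring, f2]
      have g6 : ((u - u^(q^(n+1)))^q)^(q^2) = u^(q^3) - u^(q^(n+4)) := by
        rw [← pow_mul, show q*q^2 = q^3 from by ring, frob u (u^(q^(n+1))) 3, ← pow_mul,
          show q^(n+1)*q^3 = q^(n+4) from by ring]
      have g7 : ((u - u^q^2)^(q+1))^q = (u^(q^2) - u^(q^4)) * (u^q - u^(q^3)) := by
        rw [← pow_mul, show (q+1)*q = q^2 + q from by ring, pow_add, f3, f4]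
      have g8 : ((u - u^q)^(q^2+1))^q = (u^(q^3) - u^(q^4)) * (u^q - u^(q^2)) := by
        rw [← pow_mul, show (q^2+1)*q = q^3 + q from by ring, pow_add, f2, f5]
      have g9 : (u - u^q^2)^(mseq q (n+3))
          = ((u - u^q^2)^(mseq q (n+1)))^(q^2) * ((u^(q^2) - u^(q^4)) * (u^q - u^(q^3))) := by
        rw [hm3, pow_add, pow_mul, pow_add, f3, f4]
      have g10 : (u - u^q)^(mseq q (n+3))
          = ((u - u^q)^(mseq q (n+1)))^(q^2) * ((u^(q^2) - u^(q^3)) * (u^q - u^(q^2))) := by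
        rw [hm3, pow_add, pow_mul, pow_add, f1, f5]
      have g11 : (u - u^(q^(n+3)))^q = u^q - u^(q^(n+4)) := by
        rw [frob1 u (u^(q^(n+3))), ← pow_mul, show q^(n+3)*q = q^(n+4) from by ring]
      -- the three massaged equations
      have h2 : (aeval x (A (n+2)) * (u - u ^ q ^ 2) ^ (mseq q (n+2)) * (u - u ^ q) ^ q)^q
          = ((-1) ^ (n+1) * (u - u ^ q ^ (n+2)) ^ q * (u - u ^ q) ^ (mseq q (n+2)))^q := by
        rw [ih2]
      simp only [mul_pow] at h2
      rw [hneg1, g1, g2, g3, g4] at h2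
      have h1 : (aeval x (A (n+1)) * (u - u ^ q ^ 2) ^ (mseq q (n+1)) * (u - u ^ q) ^ q)^(q^2)
          = ((-1) ^ n * (u - u ^ q ^ (n+1)) ^ q * (u - u ^ q) ^ (mseq q (n+1)))^(q^2) := by
        rw [ih1]
      simp only [mul_pow] at h1
      rw [hneg2, g5, g6] at h1
      have h3 : (x * (u - u ^ q ^ 2) ^ (q + 1))^q = ((u - u ^ q) ^ (q ^ 2 + 1))^q := by
        rw [hx]
      simp only [mul_pow] at h3
      rw [g7, g8] at h3
      -- now transform the goal
      rw [hA3, g9, g10, g11, f5]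
      have h23 : u^(q^2) - u^(q^3) ≠ 0 := by rw [← f1]; exact pow_ne_zero _ hα
      have h34 : u^(q^3) - u^(q^4) ≠ 0 := by rw [← f2]; exact pow_ne_zero _ hα
      refine mul_right_cancel₀ (b := (u^(q^2) - u^(q^3)) * (u^(q^3) - u^(q^4)))
        (mul_ne_zero h23 h34) ?_
      linear_combination
        (-((u^q - u^(q^3)) * (u^q - u^(q^2)) * (u^(q^3) - u^(q^4)))) * h2 +
        (-((u^q - u^(q^2))^2 * (u^(q^2) - u^(q^3)) * (u^(q^3) - u^(q^4)))) * h1 +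
        (-((aeval x (A (n+1)))^(q^2) * ((u - u^q^2)^(mseq q (n+1)))^(q^2)
            * (u^q - u^(q^2)) * (u^(q^2) - u^(q^3)) * (u^(q^3) - u^(q^4)))) * h3
  exact fun n => (main n).1


private lemma aeval_zero_ne (p k : ℕ) [Fact p.Prime] (q : ℕ) (hq : q = p ^ k)
    (A : ℕ → Polynomial (ZMod p)) (hA1 : A 1 = 1) (hA2 : A 2 = -1)
    (hA : ∀ r : ℕ, 1 ≤ r → A (r + 2) = -(A (r + 1)) ^ q - X ^ q * A r ^ q ^ 2) :
    ∀ n : ℕ, aeval (0 : AlgebraicClosure (ZMod p)) (A (n+1)) = (-1) ^ n := by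
  have hq0 : q ≠ 0 := by
    rw [hq]; exact pow_ne_zero _ (Fact.out : p.Prime).pos.ne'
  have hneg1 : ∀ m : ℕ, ((-1 : AlgebraicClosure (ZMod p)) ^ m) ^ q = (-1) ^ m := by
    intro m
    rw [pow_right_comm, hq, neg_one_pow_char_pow]
  have main : ∀ n : ℕ, (aeval (0 : AlgebraicClosure (ZMod p)) (A (n+1)) = (-1) ^ n) ∧
      (aeval (0 : AlgebraicClosure (ZMod p)) (A (n+2)) = (-1) ^ (n+1)) := by
    intro n
    induction n with
    | zero =>
      constructor
      · show aeval (0 : AlgebraicClosure (ZMod p)) (A 1) = (-1) ^ 0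
        rw [hA1]; simp
      · show aeval (0 : AlgebraicClosure (ZMod p)) (A 2) = (-1) ^ 1
        rw [hA2]; simp
    | succ n ih =>
      obtain ⟨ih1, ih2⟩ := ih
      refine ⟨ih2, ?_⟩
      show aeval (0 : AlgebraicClosure (ZMod p)) (A (n+3)) = (-1) ^ (n+2)
      rw [show A (n+3) = -(A (n+2)) ^ q - X ^ q * A (n+1) ^ q ^ 2 from hA (n+1) (by omega)]
      simp only [map_sub, map_neg, map_pow, map_mul, aeval_X]
      rw [ih2, hneg1, zero_pow hq0]
      ring
  exact fun n => (main n).1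

private lemma exists_good_root (p k : ℕ) [Fact p.Prime] (hk : 1 ≤ k) (q : ℕ) (hq : q = p ^ k)
    (x : AlgebraicClosure (ZMod p)) (hx0 : x ≠ 0) :
    ∃ u : AlgebraicClosure (ZMod p),
      x * (u - u ^ q ^ 2) ^ (q + 1) = (u - u ^ q) ^ (q ^ 2 + 1) ∧ u ^ q ≠ u := by
  have hq2 : 2 ≤ q := by
    rw [hq]
    calc 2 ≤ p := (Fact.out : p.Prime).two_le
    _ = p ^ 1 := (pow_one p).symm
    _ ≤ p ^ k := Nat.pow_le_pow_right (Fact.out : p.Prime).pos hk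
  set F : (AlgebraicClosure (ZMod p))[X] :=
    C x * (X - X ^ q ^ 2) ^ (q + 1) - (X - X ^ q) ^ (q ^ 2 + 1) with hF
  have hdeg2 : (X - X ^ q ^ 2 : (AlgebraicClosure (ZMod p))[X]).natDegree = q ^ 2 := by
    rw [show (X - X ^ q ^ 2 : (AlgebraicClosure (ZMod p))[X]) = -(X ^ q ^ 2 - X) from by ring, natDegree_neg,
      natDegree_sub_eq_left_of_natDegree_lt (by simp; nlinarith), natDegree_X_pow]
  have hdeg1 : (X - X ^ q : (AlgebraicClosure (ZMod p))[X]).natDegree = q := by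
    rw [show (X - X ^ q : (AlgebraicClosure (ZMod p))[X]) = -(X ^ q - X) from by ring, natDegree_neg,
      natDegree_sub_eq_left_of_natDegree_lt (by simp; nlinarith), natDegree_X_pow]
  have hCG : (C x * (X - X ^ q ^ 2) ^ (q + 1) : (AlgebraicClosure (ZMod p))[X]).natDegree = (q + 1) * q ^ 2 := by
    rw [natDegree_C_mul hx0, natDegree_pow, hdeg2]
  have hH : ((X - X ^ q) ^ (q ^ 2 + 1) : (AlgebraicClosure (ZMod p))[X]).natDegree = (q ^ 2 + 1) * q := by
    rw [natDegree_pow, hdeg1]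
  have hdegF : F.natDegree = (q + 1) * q ^ 2 := by
    rw [hF, natDegree_sub_eq_left_of_natDegree_lt (by rw [hCG, hH]; nlinarith), hCG]
  have hF0 : F ≠ 0 := by
    intro h
    rw [h, natDegree_zero] at hdegF
    nlinarith
  by_contra hcon
  push_neg at hcon
  have hroots : ∀ a ∈ F.roots, a ^ q = a := by
    intro a ha
    have h := (mem_roots hF0).mp ha
    rw [IsRoot, hF] at h
    simp only [eval_sub, eval_mul, eval_C, eval_pow, eval_X] at h
    rw [sub_eq_zero] at h
    exact hcon a h
  have hXa : ∀ a : AlgebraicClosure (ZMod p), a ^ q = a → rootMultiplicity a F ≤ q + 1 := by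
    intro a ha
    by_contra hmb
    push_neg at hmb
    have hd : (X - C a) ^ (q + 2) ∣ F :=
      dvd_trans (pow_dvd_pow _ (by omega)) (Polynomial.pow_rootMultiplicity_dvd F a)
    have hdH : (X - C a) ∣ (X - X ^ q : (AlgebraicClosure (ZMod p))[X]) :=
      dvd_iff_isRoot.mpr (by simp [IsRoot, ha])
    have hdH2 : (X - C a) ^ (q + 2) ∣ ((X - X ^ q) ^ (q ^ 2 + 1) : (AlgebraicClosure (ZMod p))[X]) :=
      dvd_trans (pow_dvd_pow_of_dvd hdH (q + 2)) (pow_dvd_pow _ (by nlinarith))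
    have hdG2 : (X - C a) ^ (q + 2) ∣ ((X - X ^ q ^ 2) ^ (q + 1) : (AlgebraicClosure (ZMod p))[X]) := by
      have e : C x * (X - X ^ q ^ 2) ^ (q + 1) = F + (X - X ^ q) ^ (q ^ 2 + 1) := by
        rw [hF]; ring
      have hdG : (X - C a) ^ (q + 2) ∣ C x * (X - X ^ q ^ 2) ^ (q + 1) := by
        rw [e]; exact dvd_add hd hdH2
      exact ((isUnit_C.mpr hx0.isUnit).dvd_mul_left).mp hdG
    have ha2 : a ^ q ^ 2 = a := by rw [show q ^ 2 = q * q from by ring, pow_mul, ha, ha]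
    have hroot2 : (X - C a) ∣ (X - X ^ q ^ 2 : (AlgebraicClosure (ZMod p))[X]) :=
      dvd_iff_isRoot.mpr (by simp [IsRoot, ha2])
    obtain ⟨g, hg⟩ := hroot2
    have hnd : ¬ (X - C a) ∣ g := by
      intro hdg
      obtain ⟨g2, hg2⟩ := hdg
      have hder : derivative (X - X ^ q ^ 2 : (AlgebraicClosure (ZMod p))[X]) = 1 := by
        have hcast : ((q ^ 2 : ℕ) : AlgebraicClosure (ZMod p)) = 0 := by
          rw [CharP.cast_eq_zero_iff (AlgebraicClosure (ZMod p)) p]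
          exact dvd_pow (hq ▸ dvd_pow_self p (by omega)) (by norm_num)
        rw [derivative_sub, derivative_X, derivative_X_pow, hcast, map_zero, zero_mul, sub_zero]
      have hdd : (X - C a) ∣ derivative (X - X ^ q ^ 2 : (AlgebraicClosure (ZMod p))[X]) := by
        rw [hg, hg2, derivative_mul]
        exact dvd_add (dvd_mul_of_dvd_right (dvd_mul_right _ _) _) (dvd_mul_right _ _)
      rw [hder] at hdd
      exact not_isUnit_X_sub_C a (isUnit_of_dvd_one hdd)
    rw [hg, mul_pow] at hdG2
    have h1 : (X - C a) ^ (q + 1) * (X - C a) ∣ (X - C a) ^ (q + 1) * g ^ (q + 1) := by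
      rw [← pow_succ]; exact hdG2
    have h2 : (X - C a) ∣ g ^ (q + 1) :=
      (mul_dvd_mul_iff_left (pow_ne_zero _ (X_sub_C_ne_zero a))).mp h1
    exact hnd ((prime_X_sub_C a).dvd_of_dvd_pow h2)
  -- counting
  classical
  have hψ : (X ^ q - X : (AlgebraicClosure (ZMod p))[X]).natDegree = q := by
    rw [natDegree_sub_eq_left_of_natDegree_lt (by simp; nlinarith), natDegree_X_pow]
  have hψ0 : (X ^ q - X : (AlgebraicClosure (ZMod p))[X]) ≠ 0 := by
    intro h
    rw [h, natDegree_zero] at hψ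
    omega
  have hsub : F.roots.toFinset ⊆ (X ^ q - X : (AlgebraicClosure (ZMod p))[X]).roots.toFinset := by
    intro a ha
    rw [Multiset.mem_toFinset] at ha ⊢
    rw [mem_roots hψ0]
    have := hroots a ha
    simp [IsRoot, this]
  have hcard1 : F.roots.toFinset.card ≤ q := by
    calc F.roots.toFinset.card ≤ (X ^ q - X : (AlgebraicClosure (ZMod p))[X]).roots.toFinset.card :=
          Finset.card_le_card hsub
    _ ≤ Multiset.card (X ^ q - X : (AlgebraicClosure (ZMod p))[X]).roots := Multiset.toFinset_card_le _
    _ ≤ (X ^ q - X : (AlgebraicClosure (ZMod p))[X]).natDegree := card_roots' _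
    _ = q := hψ
  have hcardF : Multiset.card F.roots = (q + 1) * q ^ 2 := by
    rw [← hdegF]
    exact (splits_iff_card_roots.mp (IsAlgClosed.splits F))
  have hsum : Multiset.card F.roots ≤ q * (q + 1) := by
    calc Multiset.card F.roots = ∑ a ∈ F.roots.toFinset, F.roots.count a :=
          (Multiset.toFinset_sum_count_eq _).symm
    _ ≤ ∑ a ∈ F.roots.toFinset, (q + 1) := by
          refine Finset.sum_le_sum ?_
          intro a ha
          rw [count_roots]
          exact hXa a (hroots a (Multiset.mem_toFinset.mp ha))
    _ = F.roots.toFinset.card * (q + 1) := by rw [Finset.sum_const, smul_eq_mul]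
    _ ≤ q * (q + 1) := Nat.mul_le_mul_right _ hcard1
  rw [hcardF] at hsum
  nlinarith


theorem stmt_2 (p k : ℕ) [Fact p.Prime] (hk : 1 ≤ k) (q : ℕ) (hq : q = p ^ k)
    (A : ℕ → Polynomial (ZMod p)) (hA1 : A 1 = 1) (hA2 : A 2 = -1)
    (hA : ∀ r : ℕ, 1 ≤ r → A (r + 2) = -(A (r + 1)) ^ q - X ^ q * A r ^ q ^ 2) :
    ∀ r : ℕ, 3 ≤ r →
      {x : AlgebraicClosure (ZMod p) | aeval x (A r) = 0} =
        {x : AlgebraicClosure (ZMod p) | ∃ u : AlgebraicClosure (ZMod p),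
          u ^ q ^ r = u ∧ ¬ u ^ q ^ 2 = u ∧
          x = (u - u ^ q) ^ (q ^ 2 + 1) / (u - u ^ q ^ 2) ^ (q + 1)} := by
  intro r hr
  have hq2 : 2 ≤ q := by
    rw [hq]
    calc 2 ≤ p := (Fact.out : p.Prime).two_le
    _ = p ^ 1 := (pow_one p).symm
    _ ≤ p ^ k := Nat.pow_le_pow_right (Fact.out : p.Prime).pos hk
  have hq0 : q ≠ 0 := by omega
  ext x
  simp only [Set.mem_setOf_eq]
  constructor
  · intro hzero
    have hx0 : x ≠ 0 := by
      rintro rfl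
      have h := aeval_zero_ne p k q hq A hA1 hA2 hA (r-1)
      rw [show r - 1 + 1 = r from by omega] at h
      rw [h] at hzero
      exact pow_ne_zero _ (by norm_num : (-1 : AlgebraicClosure (ZMod p)) ≠ 0) hzero
    obtain ⟨u, hux, hufix⟩ := exists_good_root p k hk q hq x hx0
    have hα : u - u ^ q ≠ 0 := sub_ne_zero.mpr (Ne.symm hufix)
    have hβ : u - u ^ q ^ 2 ≠ 0 := by
      intro h0
      rw [h0, zero_pow (by omega : q + 1 ≠ 0), mul_zero] at hux
      exact hα ((pow_eq_zero_iff (by omega : q ^ 2 + 1 ≠ 0)).mp hux.symm)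
    have hne2 : ¬ u ^ q ^ 2 = u := fun h => hβ (by rw [h, sub_self])
    have key := key_identity p k q hq A hA1 hA2 hA u x hα hux (r-1)
    rw [show r - 1 + 1 = r from by omega] at key
    rw [hzero, zero_mul, zero_mul] at key
    have hfix : u ^ q ^ r = u := by
      have h1 : (u - u ^ q ^ r) ^ q = 0 := by
        by_contra hno
        exact (mul_ne_zero (mul_ne_zero (pow_ne_zero _ (by norm_num : (-1 : AlgebraicClosure (ZMod p)) ≠ 0)) hno)
          (pow_ne_zero _ hα)) key.symm
      have h2 := (pow_eq_zero_iff hq0).mp h1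
      rw [sub_eq_zero] at h2
      exact h2.symm
    exact ⟨u, hfix, hne2, (eq_div_iff (pow_ne_zero _ hβ)).mpr hux⟩
  · rintro ⟨u, hfix, hne2, rfl⟩
    have hβ : u - u ^ q ^ 2 ≠ 0 := sub_ne_zero.mpr (Ne.symm hne2)
    have hα : u - u ^ q ≠ 0 := by
      rw [sub_ne_zero]
      intro h
      apply hne2
      have h' : u ^ q = u := h.symm
      rw [show q ^ 2 = q * q from by ring, pow_mul, h', h']
    have hux : ((u - u ^ q) ^ (q ^ 2 + 1) / (u - u ^ q ^ 2) ^ (q + 1)) * (u - u ^ q ^ 2) ^ (q + 1)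
        = (u - u ^ q) ^ (q ^ 2 + 1) := div_mul_cancel₀ _ (pow_ne_zero _ hβ)
    have key := key_identity p k q hq A hA1 hA2 hA u _ hα hux (r-1)
    rw [show r - 1 + 1 = r from by omega] at key
    rw [show u - u ^ q ^ r = 0 from by rw [hfix, sub_self], zero_pow hq0, mul_zero,
      zero_mul] at key
    rcases mul_eq_zero.mp key with h | h
    · rcases mul_eq_zero.mp h with h' | h'
      · exact h'
      · exact absurd h' (pow_ne_zero _ hβ)
    · exact absurd h (pow_ne_zero _ hα)
end

section
/- Let a ∈ GF(Q)* with A_m(a) = 0. Then: (1) for every x ∈ GF(Q) with x^{q+1} + x + a = 0, one has A_{m+1}(a) = x^{(q^m - 1)/(q - 1)} (the norm of x from GF(q^m) to GF(q)), and this element lies in GF(p^d); (2) for every integer t ≥ 1, A_{m+t}(a) = A_{m+1}(a)·A_t(a). -/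
open Polynomial

theorem stmt_8 (p k n : ℕ) [Fact p.Prime] (hk : 1 ≤ k) (hn : 1 ≤ n)
    (d m q Q : ℕ) (hd : d = Nat.gcd n k) (hm : m = n / d)
    (hq : q = p ^ k) (hQ : Q = p ^ n)
    (A : ℕ → Polynomial (ZMod p)) (hA1 : A 1 = 1) (hA2 : A 2 = -1)
    (hA : ∀ r : ℕ, 1 ≤ r → A (r + 2) = -(A (r + 1)) ^ q - X ^ q * A r ^ q ^ 2)
    (a : AlgebraicClosure (ZMod p)) (haQ : a ^ Q = a) (ha0 : a ≠ 0)
    (hma : aeval a (A m) = 0) :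
    (∀ x : AlgebraicClosure (ZMod p), x ^ Q = x → x ^ (q + 1) + x + a = 0 →
      aeval a (A (m + 1)) = x ^ ((q ^ m - 1) / (q - 1)) ∧
      (aeval a (A (m + 1))) ^ p ^ d = aeval a (A (m + 1))) ∧
    (∀ t : ℕ, 1 ≤ t → aeval a (A (m + t)) = aeval a (A (m + 1)) * aeval a (A t)) := by
  have hp : p.Prime := Fact.out
  have hq1 : 1 ≤ q := by rw [hq]; exact Nat.one_le_pow _ _ hp.pos
  have hq2 : 2 ≤ q := by
    rw [hq]
    calc 2 = 2^1 := rfl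
    _ ≤ p^1 := Nat.pow_le_pow_left hp.two_le 1
    _ ≤ p^k := Nat.pow_le_pow_right hp.pos hk
  have hqne : q ≠ 0 := by omega
  let F := AlgebraicClosure (ZMod p)
  -- Frobenius helpers
  have φadd : ∀ u v : F, (u + v) ^ q = u ^ q + v ^ q := by
    intro u v; rw [hq]; exact add_pow_char_pow u v p k
  have φneg : ∀ u : F, (-u) ^ q = -(u ^ q) := by
    intro u
    have h0 := φadd u (-u)
    rw [add_neg_cancel, zero_pow hqne] at h0
    linear_combination -h0
  -- the sequence b
  set b : ℕ → F := fun r => if r = 0 then 0 else aeval a (A r) with hb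
  have hbne : ∀ r : ℕ, r ≠ 0 → b r = aeval a (A r) := by
    intro r hr; simp [hb, hr]
  have hb0 : b 0 = 0 := by simp [hb]
  have hb1 : b 1 = 1 := by simp [hb, hA1]
  have hb2 : b 2 = -1 := by simp [hb, hA2]
  have hm1 : 1 ≤ m := by
    rw [hm]
    have hdn : d ∣ n := hd ▸ Nat.gcd_dvd_left n k
    exact Nat.one_le_div_iff (Nat.pos_of_dvd_of_pos hdn hn) |>.mpr (Nat.le_of_dvd hn hdn)
  have hbm : b m = 0 := by
    rw [hbne m (by omega), hma]
  -- twisted recurrence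
  have hrec : ∀ r : ℕ, b (r + 2) = -(b (r + 1)) ^ q - a ^ q * ((b r) ^ q) ^ q := by
    intro r
    rcases Nat.eq_zero_or_pos r with hr | hr
    · subst hr
      rw [hb2, hb1, hb0, one_pow, zero_pow hqne, zero_pow hqne]
      ring
    · rw [hbne (r+2) (by omega), hbne (r+1) (by omega), hbne r (by omega), hA r hr]
      simp only [map_sub, map_neg, map_pow, map_mul, aeval_X]
      rw [show q^2 = q*q by ring, pow_mul]
  -- untwisted recurrence
  have hU2 : ∀ r : ℕ, (b (r + 2) = -b (r + 1) - a ^ q ^ r * b r) ∧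
      (b (r + 3) = -b (r + 2) - a ^ q ^ (r+1) * b (r + 1)) := by
    intro r
    induction r with
    | zero =>
      constructor
      · rw [hb2, hb1, hb0]; ring
      · have h := hrec 1
        rw [hb2, hb1] at h
        simp only [φneg, one_pow] at h
        rw [h, hb2, hb1, pow_one]
    | succ r ih =>
      obtain ⟨u0, u1⟩ := ih
      refine ⟨u1, ?_⟩
      have t0 := hrec r
      have t1 := hrec (r+1)
      have t2 := hrec (r+2)
      -- φ applied to u1
      have u1q : (b (r+3)) ^ q = -(b (r+2)) ^ q - (a ^ q ^ (r+1)) ^ q * (b (r+1)) ^ q := by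
        rw [u1, sub_eq_add_neg, φadd, φneg, φneg, mul_pow]; ring
      -- φ² applied to u0
      have u0q : (b (r+2)) ^ q = -(b (r+1)) ^ q - (a ^ q ^ r) ^ q * (b r) ^ q := by
        rw [u0, sub_eq_add_neg, φadd, φneg, φneg, mul_pow]; ring
      have u0qq : ((b (r+2)) ^ q) ^ q = -((b (r+1)) ^ q) ^ q
          - ((a ^ q ^ r) ^ q) ^ q * ((b r) ^ q) ^ q := by
        rw [u0q, sub_eq_add_neg, φadd, φneg, φneg, mul_pow]; ring
      have e1 : b (r+2) + (b (r+1)) ^ q = -(a ^ q) * ((b r) ^ q) ^ q := by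
        linear_combination t0
      have hpow1 : a ^ q ^ (r+1) = (a ^ q ^ r) ^ q := by
        rw [← pow_mul, pow_succ]
      have hpow2 : a ^ q ^ (r+2) = ((a ^ q ^ r) ^ q) ^ q := by
        rw [← pow_mul, ← pow_mul]; congr 1; ring
      rw [show r+1+2 = r+3 by omega, show r+1+1 = r+2 by omega, hpow2]
      rw [hpow1] at u1q
      linear_combination t2 + t1 - u1q - a^q * u0qq + ((a^(q^r))^q)^q * e1
  have hU : ∀ r : ℕ, b (r + 2) = -b (r + 1) - a ^ q ^ r * b r := fun r => (hU2 r).1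
  -- b (m+1) is fixed by Frobenius q
  have hNq : (b (m + 1)) ^ q = b (m + 1) := by
    have t := hrec m
    have u := hU m
    rw [hbm, mul_zero, sub_zero] at u
    rw [hbm, zero_pow hqne, zero_pow hqne, mul_zero, sub_zero] at t
    rw [u] at t
    linear_combination t
  have φsub : ∀ u v : F, (u - v) ^ q = u ^ q - v ^ q := by
    intro u v
    rw [sub_eq_add_neg, φadd, φneg, sub_eq_add_neg]
  -- iterated fixed points
  have hfixmul : ∀ (N : F) (i : ℕ), N ^ p ^ i = N → ∀ c : ℕ, N ^ p ^ (i * c) = N := by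
    intro N i hN c
    induction c with
    | zero => simp
    | succ c ih => rw [Nat.mul_succ, pow_add, pow_mul, ih, hN]
  have hfixgcd : ∀ (N : F) (i j : ℕ), N ^ p ^ i = N → N ^ p ^ j = N →
      N ^ p ^ (Nat.gcd i j) = N := by
    intro N i j
    induction i, j using Nat.gcd.induction with
    | H0 j => intro _ h; simpa using h
    | H1 i j hi ih =>
      intro h1 h2
      rw [Nat.gcd_rec]
      refine ih ?_ h1
      calc N ^ p ^ (j % i) = (N ^ p ^ (i * (j/i))) ^ p ^ (j % i) := by
            rw [hfixmul N i h1 (j/i)]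
      _ = N ^ (p ^ (i * (j/i)) * p ^ (j % i)) := by rw [← pow_mul]
      _ = N ^ p ^ (i * (j/i) + j % i) := by rw [pow_add]
      _ = N ^ p ^ j := by rw [Nat.div_add_mod]
      _ = N := h2
  -- Part 2
  have hP2 : ∀ t : ℕ, b (m + t) = b (m + 1) * b t ∧ b (m + (t+1)) = b (m + 1) * b (t+1) := by
    intro t
    induction t with
    | zero => exact ⟨by rw [Nat.add_zero, hbm, hb0, mul_zero], by rw [hb1, mul_one]⟩
    | succ t ih =>
      obtain ⟨P0, P1⟩ := ih
      refine ⟨P1, ?_⟩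
      rw [show t+1+1 = t+2 by omega]
      have T1 : b (m + (t+2)) = -(b (m + (t+1))) ^ q - a ^ q * ((b (m+t)) ^ q) ^ q := by
        have h := hrec (m + t)
        rw [show m + t + 2 = m + (t+2) by omega, show m + t + 1 = m + (t+1) by omega] at h
        exact h
      rw [T1, P0, P1, mul_pow, mul_pow, mul_pow, hNq, hNq, hrec t]
      ring
  have part2 : ∀ t : ℕ, 1 ≤ t → aeval a (A (m+t)) = aeval a (A (m+1)) * aeval a (A t) := by
    intro t ht
    have h := (hP2 t).1
    rwa [hbne (m+t) (by omega), hbne (m+1) (by omega), hbne t (by omega)] at h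
  -- geometric sum
  have hgeo : ∀ r : ℕ, (q - 1) * (∑ i ∈ Finset.range r, q ^ i) + 1 = q ^ r := by
    intro r
    induction r with
    | zero => simp
    | succ r ih =>
      calc (q-1) * (∑ i ∈ Finset.range (r+1), q ^ i) + 1
          = ((q-1) * (∑ i ∈ Finset.range r, q ^ i) + 1) + (q-1) * q^r := by
            rw [Finset.sum_range_succ, Nat.mul_add]; ring
      _ = q^r + (q-1) * q^r := by rw [ih]
      _ = (1 + (q-1)) * q^r := by ring
      _ = q * q^r := by rw [show 1 + (q-1) = q by omega]
      _ = q^(r+1) := by rw [pow_succ, mul_comm]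
  have hEdiv : (q ^ m - 1) / (q - 1) = ∑ i ∈ Finset.range m, q ^ i := by
    have h := hgeo m
    have h2 : q ^ m - 1 = (q - 1) * (∑ i ∈ Finset.range m, q ^ i) := by omega
    rw [h2, Nat.mul_div_cancel_left _ (by omega : 0 < q - 1)]
  have hdn : d ∣ n := hd ▸ Nat.gcd_dvd_left n k
  have hdk : d ∣ k := hd ▸ Nat.gcd_dvd_right n k
  have hdpos : 0 < d := Nat.pos_of_dvd_of_pos hdn hn
  have hkm : k * m = n * (k / d) := by
    rw [hm]
    obtain ⟨k', rfl⟩ := hdk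
    rw [Nat.mul_div_cancel_left k' hdpos, Nat.mul_comm d k', Nat.mul_assoc,
      Nat.mul_div_cancel' hdn, Nat.mul_comm]
  -- Part 1
  constructor
  · intro x hxQ hx
    have hx0 : x ≠ 0 := by
      rintro rfl
      rw [zero_pow (by omega : q + 1 ≠ 0), zero_add, zero_add] at hx
      exact ha0 hx
    have hxx : x ^ q * x = -x - a := by
      rw [← pow_succ]; linear_combination hx
    have hxpn : x ^ p ^ n = x := by rw [← hQ]; exact hxQ
    have hxqm : x ^ q ^ m = x := by
      rw [hq, ← pow_mul, hkm]
      exact hfixmul x n hxpn (k / d)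
    have hH : ∀ r : ℕ, x ^ q ^ (r+1) * (b (r+1) * x - a * (b r) ^ q)
        = b (r+2) * x - a * (b (r+1)) ^ q := by
      intro r
      induction r with
      | zero =>
        show x ^ q ^ 1 * (b 1 * x - a * (b 0) ^ q) = b 2 * x - a * (b 1) ^ q
        rw [hb1, hb2, hb0, zero_pow hqne, one_pow, pow_one]
        linear_combination hxx
      | succ r ih =>
        rw [show r+1+1 = r+2 by omega, show r+1+2 = r+3 by omega]
        have ihq : (x ^ q ^ (r+1)) ^ q * ((b (r+1)) ^ q * x ^ q - a ^ q * ((b r) ^ q) ^ q)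
            = (b (r+2)) ^ q * x ^ q - a ^ q * ((b (r+1)) ^ q) ^ q := by
          have h := congrArg (fun z : F => z ^ q) ih
          rw [mul_pow, φsub, φsub] at h
          simp only [mul_pow] at h
          exact h
        have hxp : x ^ q ^ (r+2) = (x ^ q ^ (r+1)) ^ q := by
          rw [← pow_mul, pow_succ]
        rw [hxp]
        linear_combination x * ihq + ((b (r+2))^q - (x^(q^(r+1)))^q * (b (r+1))^q) * hxx
          + (x * (x^(q^(r+1)))^q) * hrec r - x * hrec (r+1)
    have hJ : ∀ r : ℕ, x ^ (∑ i ∈ Finset.range (r+1), q ^ i)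
        = b (r+1) * x - a * (b r) ^ q := by
      intro r
      induction r with
      | zero =>
        show x ^ (∑ i ∈ Finset.range 1, q ^ i) = b 1 * x - a * (b 0) ^ q
        rw [hb1, hb0, zero_pow hqne]
        simp
      | succ r ih =>
        rw [show r+1+1 = r+2 by omega]
        calc x ^ (∑ i ∈ Finset.range (r+2), q ^ i)
            = x ^ q ^ (r+1) * x ^ (∑ i ∈ Finset.range (r+1), q^i) := by
              rw [Finset.sum_range_succ, pow_add]; ring
        _ = x ^ q ^ (r+1) * (b (r+1) * x - a * (b r)^q) := by rw [ih]
        _ = b (r+2) * x - a * (b (r+1))^q := hH r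
    obtain ⟨m', hm'⟩ : ∃ m', m = m' + 1 := ⟨m - 1, by omega⟩
    have hJm := hJ m'
    rw [← hm', hbm, zero_mul, zero_sub] at hJm
    have hHm := hH m'
    rw [show m'+2 = m'+1+1 by omega, ← hm', hxqm, hbm, zero_mul, zero_sub,
      zero_pow hqne, mul_zero, sub_zero] at hHm
    -- hHm : x * -(a * (b m')^q) = b (m+1) * x
    have hbm1 : b (m+1) = x ^ (∑ i ∈ Finset.range m, q ^ i) := by
      refine mul_right_cancel₀ hx0 ?_
      linear_combination -hHm - x * hJm
    constructor
    · rw [← hbne (m+1) (by omega), hbm1, hEdiv]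
    · rw [← hbne (m+1) (by omega)]
      have hNpk : (b (m+1)) ^ p ^ k = b (m+1) := by rw [← hq]; exact hNq
      have hNpn : (b (m+1)) ^ p ^ n = b (m+1) := by
        rw [hbm1, pow_right_comm, hxpn]
      have h := hfixgcd (b (m+1)) n k hNpn hNpk
      rwa [← hd] at h
  · exact part2
end

section
/- Let a ∈ GF(Q)* with A_m(a) = 0. Then B_{l·m}(a) = B_m(a)^l for every integer l ≥ 1. -/
open Polynomial

theorem stmt_9 (p k n : ℕ) [Fact p.Prime] (hk : 1 ≤ k) (hn : 1 ≤ n)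
    (d m q Q : ℕ) (hd : d = Nat.gcd n k) (hm : m = n / d)
    (hq : q = p ^ k) (hQ : Q = p ^ n)
    (A : ℕ → Polynomial (ZMod p)) (hA1 : A 1 = 1) (hA2 : A 2 = -1)
    (hA : ∀ r : ℕ, 1 ≤ r → A (r + 2) = -(A (r + 1)) ^ q - X ^ q * A r ^ q ^ 2)
    (a : AlgebraicClosure (ZMod p)) (haQ : a ^ Q = a) (ha0 : a ≠ 0)
    (B : ℕ → AlgebraicClosure (ZMod p)) (hB1 : B 1 = 0)
    (hB : ∀ r : ℕ, 1 ≤ r → B (r + 1) = -a * (aeval a (A r)) ^ q)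
    (hma : aeval a (A m) = 0) :
    ∀ l : ℕ, 1 ≤ l → B (l * m) = B m ^ l := by
  have hp0 : p ≠ 0 := (Fact.out : p.Prime).pos.ne'
  set C : ℕ → AlgebraicClosure (ZMod p) := fun r => aeval a (A r) with hCdef
  have hq0 : q ≠ 0 := by rw [hq]; exact pow_ne_zero _ hp0
  have hq2 : q * q = q ^ 2 := (sq q).symm
  -- neg-pow lemma for powers of p
  have hnegp : ∀ (N : ℕ) (x : AlgebraicClosure (ZMod p)),
      (-x) ^ p ^ N = -(x ^ p ^ N) := by
    intro N x
    calc (-x) ^ p ^ N = ((-1 : AlgebraicClosure (ZMod p)) * x) ^ p ^ N := by ring_nf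
    _ = (-1 : AlgebraicClosure (ZMod p)) ^ p ^ N * x ^ p ^ N := mul_pow _ _ _
    _ = -(x ^ p ^ N) := by rw [neg_one_pow_char_pow]; ring
  have hnegq : ∀ x : AlgebraicClosure (ZMod p), (-x) ^ q = -(x ^ q) := by
    intro x; rw [hq]; exact hnegp k x
  have hC1 : C 1 = 1 := by simp [hCdef, hA1]
  have hC2 : C 2 = -1 := by simp [hCdef, hA2]
  have hCrec : ∀ r : ℕ, 1 ≤ r → C (r + 2) = -(C (r + 1)) ^ q - a ^ q * (C r) ^ q ^ 2 := by
    intro r hr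
    simp only [hCdef]
    rw [hA r hr]
    simp [map_sub, map_pow, map_mul]
  have hCm : C m = 0 := hma
  have hm1 : 1 ≤ m := by
    have hd1 : 1 ≤ d := by rw [hd]; exact Nat.gcd_pos_of_pos_left _ hn
    have hdn : d ∣ n := hd ▸ Nat.gcd_dvd_left n k
    rw [hm]
    exact Nat.one_le_div_iff hd1 |>.mpr (Nat.le_of_dvd hn hdn)
  have hm2 : 2 ≤ m := by
    rcases Nat.lt_or_ge m 2 with h | h
    · interval_cases m
      · exact absurd (hC1 ▸ hCm) one_ne_zero
    · exact h
  obtain ⟨s, hs⟩ : ∃ s, m = s + 2 := ⟨m - 2, by omega⟩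
  have hBm : B m = -a * (C (s + 1)) ^ q := by rw [hs]; exact hB (s + 1) (by omega)
  -- auxiliary: (-a * x^q)^q = -(a^q * x^(q^2))
  have haux : ∀ x : AlgebraicClosure (ZMod p),
      (-a * x ^ q) ^ q = -(a ^ q * x ^ q ^ 2) := by
    intro x
    rw [neg_mul, hnegq, mul_pow, ← pow_mul, hq2]
  have key1 : C (m + 1) = B m ^ q ^ 1 * C 1 := by
    have h := hCrec (s + 1) (by omega)
    have e1 : s + 1 + 2 = m + 1 := by omega
    have e2 : s + 1 + 1 = m := by omega
    rw [e1, e2, hCm, zero_pow hq0] at h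
    rw [h, hBm, hC1, pow_one, mul_one, haux]
    ring
  have key2 : C (m + 2) = B m ^ q ^ 2 * C 2 := by
    have h := hCrec m (by omega)
    rw [hCm, zero_pow (pow_ne_zero 2 hq0)] at h
    rw [h, key1, hC1, hC2, mul_one, ← pow_mul, pow_one, hq2]
    ring
  have key : ∀ r : ℕ, 1 ≤ r → C (m + r) = B m ^ q ^ r * C r := by
    intro r
    induction r using Nat.strong_induction_on with
    | _ r ih =>
      intro hr
      match r, hr with
      | 1, _ => exact key1
      | 2, _ => exact key2
      | (t + 3), _ =>
        have h1 := ih (t + 1) (by omega) (by omega)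
        have h2 := ih (t + 2) (by omega) (by omega)
        have hrec := hCrec (m + t + 1) (by omega)
        have e1 : m + t + 1 + 2 = m + (t + 3) := by omega
        have e2 : m + t + 1 + 1 = m + (t + 2) := by omega
        have e3 : m + t + 1 = m + (t + 1) := by omega
        rw [e1, e2, e3, h1, h2] at hrec
        have hrec2 := hCrec (t + 1) (by omega)
        rw [hrec, hrec2, mul_pow, mul_pow, ← pow_mul, ← pow_mul, ← pow_succ]
        have e4 : q ^ (t + 1) * q ^ 2 = q ^ (t + 3) := by rw [← pow_add]
        rw [e4]
        ring
  have keyB : ∀ r : ℕ, 1 ≤ r → B (m + r) = B m ^ q ^ r * B r := by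
    intro r hr
    match r, hr with
    | 1, _ =>
      have h := hB m (by omega)
      rw [show (aeval a (A m) : AlgebraicClosure (ZMod p)) = C m from rfl, hCm,
        zero_pow hq0] at h
      rw [h, hB1]
      ring
    | (t + 2), _ =>
      have h := hB (m + t + 1) (by omega)
      have e1 : m + t + 1 + 1 = m + (t + 2) := by omega
      have e2 : m + t + 1 = m + (t + 1) := by omega
      rw [e1] at h
      rw [show (aeval a (A (m + t + 1)) : AlgebraicClosure (ZMod p)) = C (m + t + 1)
        from rfl, e2, key (t + 1) (by omega)] at h
      rw [h, hB (t + 1) (by omega),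
        show (aeval a (A (t + 1)) : AlgebraicClosure (ZMod p)) = C (t + 1) from rfl,
        mul_pow, ← pow_mul, ← pow_succ]
      ring
  have haqm : a ^ q ^ m = a := by
    have hdk : d ∣ k := hd ▸ Nat.gcd_dvd_right n k
    have hdn : d ∣ n := hd ▸ Nat.gcd_dvd_left n k
    obtain ⟨e, hke⟩ := hdk
    have hkm : k * m = e * n := by
      have hc : d * (n / d) = n := Nat.mul_div_cancel' hdn
      calc k * m = d * e * (n / d) := by rw [hke, hm]
      _ = e * (d * (n / d)) := by ring
      _ = e * n := by rw [hc]
    have haj : ∀ j : ℕ, a ^ (p ^ n) ^ j = a := by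
      intro j
      induction j with
      | zero => simp
      | succ j ihj => rw [pow_succ, pow_mul, ihj, ← hQ, haQ]
    calc a ^ q ^ m = a ^ p ^ (k * m) := by rw [hq, ← pow_mul]
    _ = a ^ (p ^ n) ^ e := by rw [hkm, mul_comm e n, pow_mul]
    _ = a := haj e
  have hqm : q ^ m = p ^ (k * m) := by rw [hq, ← pow_mul]
  have hfixaeval : ∀ P : Polynomial (ZMod p),
      (aeval a P : AlgebraicClosure (ZMod p)) ^ q ^ m = aeval a P := by
    intro P
    have h := Polynomial.hom_eval₂ P (algebraMap (ZMod p) (AlgebraicClosure (ZMod p)))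
      (iterateFrobenius (AlgebraicClosure (ZMod p)) p (k * m)) a
    rw [Subsingleton.elim ((iterateFrobenius (AlgebraicClosure (ZMod p)) p (k * m)).comp
      (algebraMap (ZMod p) (AlgebraicClosure (ZMod p))))
      (algebraMap (ZMod p) (AlgebraicClosure (ZMod p)))] at h
    rw [hqm]
    simpa [iterateFrobenius_def, hqm ▸ haqm, aeval_def] using h
  have hfixB : B m ^ q ^ m = B m := by
    rw [hBm, neg_mul, hqm, hnegp, ← hqm, mul_pow, haqm, ← pow_mul,
      mul_comm q (q ^ m), pow_mul, hfixaeval (A (s + 1))]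
  have hfixBiter : ∀ j : ℕ, B m ^ (q ^ m) ^ j = B m := by
    intro j
    induction j with
    | zero => simp
    | succ j ihj => rw [pow_succ, pow_mul, ihj, hfixB]
  intro l hl
  induction l with
  | zero => omega
  | succ l ihl =>
    rcases Nat.eq_or_lt_of_le hl with h | h
    · rw [← h]; simp
    · have hl1 : 1 ≤ l := by omega
      have e1 : (l + 1) * m = m + l * m := by ring
      rw [e1, keyB (l * m) (Nat.mul_pos (by omega) (by omega)), ihl hl1]
      have e2 : q ^ (l * m) = (q ^ m) ^ l := by rw [← pow_mul, mul_comm]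
      rw [e2, hfixBiter l, pow_succ]
      ring
end

section
/- Let a ∈ GF(Q)*. For every integer r ≥ 2, the identity X^{q^r} = Σ_{i=1}^{r-1} A_{r-i}(a)^{q^i}·L_a(X)^{q^{i-1}} + A_r(a)·X^q + B_r(a)·X holds in the polynomial ring GF(Q)[X]. -/
open Polynomial

theorem stmt_10 (p k n : ℕ) [Fact p.Prime] (hk : 1 ≤ k) (hn : 1 ≤ n)
    (q Q : ℕ) (hq : q = p ^ k) (hQ : Q = p ^ n)
    (A : ℕ → Polynomial (ZMod p)) (hA1 : A 1 = 1) (hA2 : A 2 = -1)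
    (hA : ∀ r : ℕ, 1 ≤ r → A (r + 2) = -(A (r + 1)) ^ q - X ^ q * A r ^ q ^ 2)
    (a : GaloisField p n) (ha0 : a ≠ 0)
    (B : ℕ → GaloisField p n) (hB1 : B 1 = 0)
    (hB : ∀ r : ℕ, 1 ≤ r → B (r + 1) = -a * (aeval a (A r)) ^ q) :
    ∀ r : ℕ, 2 ≤ r →
      (X : Polynomial (GaloisField p n)) ^ q ^ r =
        (∑ i ∈ Finset.Icc 1 (r - 1), C ((aeval a (A (r - i))) ^ q ^ i) *
            (X ^ q ^ 2 + X ^ q + C a * X) ^ q ^ (i - 1)) +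
          C (aeval a (A r)) * X ^ q + C (B r) * X := by
  subst hq
  have hpk0 : p ^ k ≠ 0 := pow_ne_zero _ (Fact.out (p := p.Prime)).pos.ne'
  have negpow : ∀ x : GaloisField p n, (-x) ^ p ^ k = -(x ^ p ^ k) := by
    intro x
    have h := sub_pow_char_pow (p := p) (n := k) (x := (0 : GaloisField p n)) (y := x)
    rwa [zero_pow hpk0, zero_sub, zero_sub] at h
  intro r hr
  induction r, hr using Nat.le_induction with
  | base =>
    have hB2 : B 2 = -a := by
      have h := hB 1 le_rfl
      rw [hA1, map_one, one_pow, mul_one] at h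
      exact h
    rw [hB2, hA2]
    simp only [show (2 : ℕ) - 1 = 1 from rfl, Finset.Icc_self, Finset.sum_singleton,
      show (1 : ℕ) - 1 = 0 from rfl, hA1, map_one, one_pow, pow_one, pow_zero,
      map_neg, map_one]
    ring
  | succ r hr ih =>
    have hBr1 : B (r + 1) = -a * (aeval a (A r)) ^ p ^ k := hB r (by omega)
    have hBr : B r = -a * (aeval a (A (r - 1))) ^ p ^ k := by
      have h := hB (r - 1) (by omega)
      rwa [Nat.sub_add_cancel (by omega)] at h
    have hArec : aeval a (A (r + 1)) =
        -(aeval a (A r)) ^ p ^ k - a ^ p ^ k * (aeval a (A (r - 1))) ^ (p ^ k) ^ 2 := by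
      have h := hA (r - 1) (by omega)
      rw [show r - 1 + 2 = r + 1 by omega, show r - 1 + 1 = r by omega] at h
      rw [h]
      simp [map_sub, map_neg, map_pow, map_mul]
    have hα : aeval a (A (r + 1)) = (B r) ^ p ^ k - (aeval a (A r)) ^ p ^ k := by
      rw [hArec, hBr, neg_mul, negpow, mul_pow,
        ← pow_mul (aeval a (A (r - 1))) (p ^ k) (p ^ k), ← pow_two]
      ring
    have hfrob : (X : Polynomial (GaloisField p n)) ^ (p ^ k) ^ (r + 1)
        = ((X : Polynomial (GaloisField p n)) ^ (p ^ k) ^ r) ^ p ^ k := by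
      rw [← pow_mul (X : Polynomial (GaloisField p n)) ((p ^ k) ^ r) (p ^ k), ← pow_succ]
    have h1 : (C (aeval a (A r)) * (X : Polynomial (GaloisField p n)) ^ p ^ k) ^ p ^ k
        = C ((aeval a (A r)) ^ p ^ k) * X ^ (p ^ k) ^ 2 := by
      rw [mul_pow, ← map_pow, ← pow_mul (X : Polynomial (GaloisField p n)) (p ^ k) (p ^ k),
        ← pow_two]
    have h2 : (C (B r) * (X : Polynomial (GaloisField p n))) ^ p ^ k
        = C ((B r) ^ p ^ k) * X ^ p ^ k := by
      rw [mul_pow, ← map_pow]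
    have hins : Finset.Icc 1 (r + 1 - 1) = insert 1 (Finset.Icc 2 r) := by
      ext x
      simp only [Finset.mem_Icc, Finset.mem_insert]
      omega
    have hmapIcc : Finset.Icc 2 r
        = (Finset.Icc 1 (r - 1)).map ⟨(· + 1), add_left_injective 1⟩ := by
      ext x
      simp only [Finset.mem_Icc, Finset.mem_map, Function.Embedding.coeFn_mk]
      constructor
      · intro h
        exact ⟨x - 1, by omega, by omega⟩
      · rintro ⟨y, hy, rfl⟩
        omega
    have hmap : ∑ i ∈ Finset.Icc 2 r,
          C ((aeval a (A (r + 1 - i))) ^ (p ^ k) ^ i) *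
            ((X : Polynomial (GaloisField p n)) ^ (p ^ k) ^ 2 + X ^ p ^ k + C a * X) ^ (p ^ k) ^ (i - 1)
        = ∑ i ∈ Finset.Icc 1 (r - 1),
          (C ((aeval a (A (r - i))) ^ (p ^ k) ^ i) *
            ((X : Polynomial (GaloisField p n)) ^ (p ^ k) ^ 2 + X ^ p ^ k + C a * X) ^ (p ^ k) ^ (i - 1)) ^ p ^ k := by
      rw [hmapIcc, Finset.sum_map]
      refine Finset.sum_congr rfl ?_
      intro i hi
      simp only [Finset.mem_Icc, Function.Embedding.coeFn_mk] at hi ⊢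
      obtain ⟨j, rfl⟩ : ∃ j, i = j + 1 := ⟨i - 1, by omega⟩
      simp only [Nat.add_sub_cancel]
      rw [show r + 1 - (j + 1 + 1) = r - (j + 1) from by omega]
      rw [mul_pow,
        ← map_pow (C : GaloisField p n →+* Polynomial (GaloisField p n))
          ((aeval a (A (r - (j + 1)))) ^ (p ^ k) ^ (j + 1)) (p ^ k),
        ← pow_mul (aeval a (A (r - (j + 1)))) ((p ^ k) ^ (j + 1)) (p ^ k),
        ← pow_mul ((X : Polynomial (GaloisField p n)) ^ (p ^ k) ^ 2 + X ^ p ^ k + C a * X)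
          ((p ^ k) ^ j) (p ^ k),
        ← pow_succ, ← pow_succ]
    rw [hfrob, ih, add_pow_char_pow, add_pow_char_pow, sum_pow_char_pow, h1, h2,
      hins, Finset.sum_insert (by simp), hmap, hα, hBr1, Nat.add_sub_cancel]
    simp only [pow_one, Nat.sub_self, pow_zero, map_sub, map_neg, map_mul]
    ring
end

section
/- Let a ∈ GF(Q)* with A_m(a) = 0. Then F_1(X) = G_1(L_a(X)) = L_a(G_1(X)) as polynomials in GF(Q)[X]. -/
open Polynomial

private lemma frob3 {p : ℕ} [Fact p.Prime] {S : Type*} [CommRing S] [CharP S p]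
    {N e : ℕ} (hN : N = p ^ e) (x y z : S) :
    (-x - y * z) ^ N = -x ^ N - y ^ N * z ^ N := by
  subst hN
  rw [show -x - y * z = (-1) * (x + y * z) from by ring, mul_pow, neg_one_pow_char_pow,
    add_pow_char_pow, mul_pow]
  ring

private lemma frob2 {p : ℕ} [Fact p.Prime] {S : Type*} [CommRing S] [CharP S p]
    {N e : ℕ} (hN : N = p ^ e) (x y : S) :
    (x - y) ^ N = x ^ N - y ^ N := by
  subst hN; exact sub_pow_char_pow ..

private theorem auxE {p : ℕ} [Fact p.Prime] {k q : ℕ} (hq : q = p ^ k)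
    (A : ℕ → Polynomial (ZMod p)) (hA1 : A 1 = 1) (hA2 : A 2 = -1)
    (hA : ∀ r : ℕ, 1 ≤ r → A (r + 2) = -(A (r + 1)) ^ q - X ^ q * A r ^ q ^ 2) :
    ∀ r : ℕ, 1 ≤ r → A (r + 2) = -A (r + 1) - X ^ q ^ r * A r := by
  have hqe : ∀ e : ℕ, q ^ e = p ^ (k * e) := fun e => by rw [hq, ← pow_mul]
  have e1 : A 3 = -A 2 - X ^ q ^ 1 * A 1 := by
    have h : A 3 = -(A 2) ^ q - X ^ q * A 1 ^ q ^ 2 := hA 1 le_rfl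
    rw [h, hA1, hA2, one_pow, mul_one, mul_one, pow_one, hq, neg_one_pow_char_pow]
  have e1' : A 3 = 1 - X ^ q := by rw [e1, hA1, hA2, pow_one]; ring
  have e2 : A 4 = -A 3 - X ^ q ^ 2 * A 2 := by
    have h : A 4 = -(A 3) ^ q - X ^ q * A 2 ^ q ^ 2 := hA 2 (by norm_num)
    have hs : ((1 : Polynomial (ZMod p)) - X ^ q) ^ q = 1 - X ^ q ^ 2 := by
      rw [frob2 hq, one_pow, ← pow_mul, ← pow_two]
    have hneg : ((-1 : Polynomial (ZMod p))) ^ q ^ 2 = -1 := by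
      rw [hqe 2, neg_one_pow_char_pow]
    rw [h, e1', hA2, hs, hneg]
    ring
  have key : ∀ r : ℕ, 1 ≤ r →
      (A (r + 2) = -A (r + 1) - X ^ q ^ r * A r) ∧
      (A (r + 3) = -A (r + 2) - X ^ q ^ (r + 1) * A (r + 1)) := by
    intro r hr
    induction r, hr using Nat.le_induction with
    | base => exact ⟨e1, e2⟩
    | succ r hr ih =>
      refine ⟨ih.2, ?_⟩
      show A (r + 4) = -A (r + 3) - X ^ q ^ (r + 2) * A (r + 2)
      have h1 : A (r + 3) = -(A (r + 2)) ^ q - X ^ q * A (r + 1) ^ q ^ 2 := hA (r + 1) (by omega)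
      have h3 : A (r + 2) = -(A (r + 1)) ^ q - X ^ q * A r ^ q ^ 2 := hA r (by omega)
      have h2 : (A (r + 3)) ^ q = -(A (r + 2)) ^ q - X ^ q ^ (r + 2) * (A (r + 1)) ^ q := by
        rw [ih.2, frob3 hq]; ring
      have h4 : (A (r + 2)) ^ q ^ 2 = -(A (r + 1)) ^ q ^ 2 - X ^ q ^ (r + 2) * (A r) ^ q ^ 2 := by
        rw [ih.1, frob3 (hqe 2)]; ring
      have h0 : A (r + 4) = -(A (r + 3)) ^ q - X ^ q * A (r + 2) ^ q ^ 2 := hA (r + 2) (by omega)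
      rw [h0]
      linear_combination (-1 : Polynomial (ZMod p)) * h2 - X ^ q * h4 + h1
        + X ^ q ^ (r + 2) * h3
  exact fun r hr => (key r hr).1

private theorem mainAux {p : ℕ} [Fact p.Prime] {S : Type*} [CommRing S] [CharP S p]
    {k q m : ℕ} (hq : q = p ^ k) (hm3 : 3 ≤ m)
    (α : S) (β : ℕ → S)
    (hβ1 : β 1 = 1) (hβ2 : β 2 = -1) (hβm : β m = 0)
    (hrec : ∀ r : ℕ, 1 ≤ r → β (r + 2) = -(β (r + 1)) ^ q - α ^ q * (β r) ^ q ^ 2)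
    (hrecE : ∀ r : ℕ, 1 ≤ r → β (r + 2) = -β (r + 1) - α ^ q ^ r * β r)
    (ham : α ^ q ^ m = α) :
    (∑ j ∈ Finset.range (m - 1), C ((β (m - 1 - j)) ^ q ^ (j + 1)) * X ^ q ^ j : S[X]).comp
        (X ^ q ^ 2 + X ^ q + C α * X) = X ^ q ^ m + C (α * (β (m - 1)) ^ q) * X ∧
    (X ^ q ^ 2 + X ^ q + C α * X : S[X]).comp
        (∑ j ∈ Finset.range (m - 1), C ((β (m - 1 - j)) ^ q ^ (j + 1)) * X ^ q ^ j)
      = X ^ q ^ m + C (α * (β (m - 1)) ^ q) * X := by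
  have hqe : ∀ e : ℕ, q ^ e = p ^ (k * e) := fun e => by rw [hq, ← pow_mul]
  have hq0 : q ≠ 0 := by subst hq; exact pow_ne_zero _ (Nat.Prime.ne_zero Fact.out)
  have hK : ∀ t : ℕ, t + 3 ≤ m →
      (β (m - t)) ^ q ^ t + (β (m - 1 - t)) ^ q ^ (t + 1)
        + α ^ q ^ (t + 1) * (β (m - 2 - t)) ^ q ^ (t + 2) = 0 := by
    intro t ht
    have h1 : m - t = (m - 2 - t) + 2 := by omega
    have h2 : m - 1 - t = (m - 2 - t) + 1 := by omega
    rw [h1, h2]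
    have h' : (β ((m - 2 - t) + 2)) ^ q ^ t
        = -(β ((m - 2 - t) + 1)) ^ q ^ (t + 1)
          - α ^ q ^ (t + 1) * (β (m - 2 - t)) ^ q ^ (t + 2) := by
      rw [hrec (m - 2 - t) (by omega), frob3 (hqe t)]; ring
    linear_combination h'
  have hK' : ∀ t : ℕ, t + 3 ≤ m →
      (β (m - t)) ^ q ^ (t + 2) + (β (m - 1 - t)) ^ q ^ (t + 2)
        + α * (β (m - 2 - t)) ^ q ^ (t + 2) = 0 := by
    intro t ht
    have h1 : m - t = (m - 2 - t) + 2 := by omega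
    have h2 : m - 1 - t = (m - 2 - t) + 1 := by omega
    rw [h1, h2]
    have hα : (α ^ q ^ (m - 2 - t)) ^ q ^ (t + 2) = α := by
      rw [← pow_mul, ← pow_add, show m - 2 - t + (t + 2) = m from by omega, ham]
    have h' : (β ((m - 2 - t) + 2)) ^ q ^ (t + 2)
        = -(β ((m - 2 - t) + 1)) ^ q ^ (t + 2) - α * (β (m - 2 - t)) ^ q ^ (t + 2) := by
      rw [hrecE (m - 2 - t) (by omega), frob3 (hqe (t + 2)), hα]
    linear_combination h'
  have hLapow : ∀ e : ℕ, ((X : S[X]) ^ q ^ 2 + X ^ q + C α * X) ^ q ^ e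
      = X ^ q ^ (e + 2) + X ^ q ^ (e + 1) + C (α ^ q ^ e) * X ^ q ^ e := by
    intro e
    rw [hqe e, add_pow_char_pow, add_pow_char_pow, mul_pow, ← C_pow, ← hqe e,
      ← pow_mul, ← pow_mul,
      show q ^ 2 * q ^ e = q ^ (e + 2) from by rw [← pow_add, Nat.add_comm],
      show q * q ^ e = q ^ (e + 1) from (pow_succ' q e).symm]
  have T1 : ∀ t : ℕ, t + 2 ≤ m →
      (∑ j ∈ Finset.range (t + 1), C ((β (m - 1 - j)) ^ q ^ (j + 1))
          * ((X : S[X]) ^ q ^ 2 + X ^ q + C α * X) ^ q ^ j)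
        = C ((β (m - 1 - t)) ^ q ^ (t + 1)) * X ^ q ^ (t + 2)
          + C ((β (m - t)) ^ q ^ t + (β (m - 1 - t)) ^ q ^ (t + 1)) * X ^ q ^ (t + 1)
          + C (α * (β (m - 1)) ^ q ^ 1) * X := by
    intro t
    induction t with
    | zero =>
      intro _
      simp only [zero_add, Nat.sub_zero, Finset.sum_range_one, hβm, pow_zero, pow_one,
        C_add, C_mul, map_zero]
      ring
    | succ t IH =>
      intro ht
      rw [Finset.sum_range_succ, IH (by omega), hLapow (t + 1)]
      rw [show m - (t + 1) = m - 1 - t from by omega,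
        show m - 1 - (t + 1) = m - 2 - t from by omega,
        show t + 1 + 1 = t + 2 from by omega]
      have hKc : (C ((β (m - t)) ^ q ^ t) + C ((β (m - 1 - t)) ^ q ^ (t + 1))
          + C (α ^ q ^ (t + 1)) * C ((β (m - 2 - t)) ^ q ^ (t + 2)) : S[X]) = 0 := by
        rw [← C_mul, ← C_add, ← C_add, hK t (by omega), map_zero]
      simp only [C_add, C_mul]
      linear_combination (X : S[X]) ^ q ^ (t + 1) * hKc
  have T2 : ∀ t : ℕ, t + 2 ≤ m →
      (∑ j ∈ Finset.range (t + 1),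
          (C ((β (m - 1 - j)) ^ q ^ (j + 3)) * X ^ q ^ (j + 2)
           + C ((β (m - 1 - j)) ^ q ^ (j + 2)) * X ^ q ^ (j + 1)
           + C (α * (β (m - 1 - j)) ^ q ^ (j + 1)) * X ^ q ^ j))
        = C ((β (m - 1 - t)) ^ q ^ (t + 3)) * X ^ q ^ (t + 2)
          + C ((β (m - t)) ^ q ^ (t + 2) + (β (m - 1 - t)) ^ q ^ (t + 2)) * X ^ q ^ (t + 1)
          + C (α * (β (m - 1)) ^ q ^ 1) * X := by
    intro t
    induction t with
    | zero =>
      intro _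
      simp only [zero_add, Nat.sub_zero, Finset.sum_range_one, hβm, pow_zero, pow_one,
        C_add, C_mul]
      rw [zero_pow (pow_ne_zero 2 hq0), map_zero]
      ring
    | succ t IH =>
      intro ht
      rw [Finset.sum_range_succ, IH (by omega)]
      rw [show m - (t + 1) = m - 1 - t from by omega,
        show m - 1 - (t + 1) = m - 2 - t from by omega,
        show t + 1 + 1 = t + 2 from by omega,
        show t + 1 + 2 = t + 3 from by omega,
        show t + 1 + 3 = t + 4 from by omega]
      have hKc : (C ((β (m - t)) ^ q ^ (t + 2)) + C ((β (m - 1 - t)) ^ q ^ (t + 2))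
          + C α * C ((β (m - 2 - t)) ^ q ^ (t + 2)) : S[X]) = 0 := by
        rw [← C_mul, ← C_add, ← C_add, hK' t (by omega), map_zero]
      simp only [C_add, C_mul]
      linear_combination (X : S[X]) ^ q ^ (t + 1) * hKc
  constructor
  · rw [Polynomial.sum_comp]
    have hsc : (∑ j ∈ Finset.range (m - 1),
        (C ((β (m - 1 - j)) ^ q ^ (j + 1)) * X ^ q ^ j : S[X]).comp
          (X ^ q ^ 2 + X ^ q + C α * X))
        = ∑ j ∈ Finset.range (m - 1), C ((β (m - 1 - j)) ^ q ^ (j + 1))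
            * ((X : S[X]) ^ q ^ 2 + X ^ q + C α * X) ^ q ^ j :=
      Finset.sum_congr rfl fun j _ => by rw [mul_comp, C_comp, X_pow_comp]
    rw [hsc]
    have hT := T1 (m - 2) (by omega)
    rw [show m - 2 + 1 = m - 1 from by omega, show m - 2 + 2 = m from by omega,
      show m - 1 - (m - 2) = 1 from by omega, show m - (m - 2) = 2 from by omega,
      hβ1, hβ2, one_pow] at hT
    have hneg : ((-1 : S)) ^ q ^ (m - 2) = -1 := by rw [hqe (m - 2), neg_one_pow_char_pow]
    rw [hneg, neg_add_cancel, map_zero, zero_mul, add_zero, map_one, one_mul, pow_one] at hT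
    exact hT
  · rw [add_comp, add_comp, X_pow_comp, X_pow_comp, mul_comp, C_comp, X_comp]
    have hG2 : (∑ j ∈ Finset.range (m - 1),
        C ((β (m - 1 - j)) ^ q ^ (j + 1)) * X ^ q ^ j : S[X]) ^ q ^ 2
        = ∑ j ∈ Finset.range (m - 1), C ((β (m - 1 - j)) ^ q ^ (j + 3)) * X ^ q ^ (j + 2) := by
      rw [hqe 2, sum_pow_char_pow]
      refine Finset.sum_congr rfl fun j _ => ?_
      rw [← hqe 2, mul_pow, ← C_pow, ← pow_mul, ← pow_mul,
        show q ^ (j + 1) * q ^ 2 = q ^ (j + 3) from by rw [← pow_add],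
        show q ^ j * q ^ 2 = q ^ (j + 2) from by rw [← pow_add]]
    have hG1p : (∑ j ∈ Finset.range (m - 1),
        C ((β (m - 1 - j)) ^ q ^ (j + 1)) * X ^ q ^ j : S[X]) ^ q
        = ∑ j ∈ Finset.range (m - 1), C ((β (m - 1 - j)) ^ q ^ (j + 2)) * X ^ q ^ (j + 1) := by
      rw [show ((∑ j ∈ Finset.range (m - 1),
          C ((β (m - 1 - j)) ^ q ^ (j + 1)) * X ^ q ^ j : S[X]) ^ q)
        = (∑ j ∈ Finset.range (m - 1),
          C ((β (m - 1 - j)) ^ q ^ (j + 1)) * X ^ q ^ j : S[X]) ^ q ^ 1 from by rw [pow_one]]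
      rw [hqe 1, sum_pow_char_pow]
      refine Finset.sum_congr rfl fun j _ => ?_
      rw [← hqe 1, mul_pow, ← C_pow, ← pow_mul, ← pow_mul,
        show q ^ (j + 1) * q ^ 1 = q ^ (j + 2) from by rw [← pow_add],
        show q ^ j * q ^ 1 = q ^ (j + 1) from by rw [← pow_add]]
    have hG0 : (C α * ∑ j ∈ Finset.range (m - 1),
        C ((β (m - 1 - j)) ^ q ^ (j + 1)) * X ^ q ^ j : S[X])
        = ∑ j ∈ Finset.range (m - 1), C (α * (β (m - 1 - j)) ^ q ^ (j + 1)) * X ^ q ^ j := by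
      rw [Finset.mul_sum]
      exact Finset.sum_congr rfl fun j _ => by rw [← mul_assoc, ← C_mul]
    rw [hG2, hG1p, hG0, ← Finset.sum_add_distrib, ← Finset.sum_add_distrib]
    have hT := T2 (m - 2) (by omega)
    rw [show m - 2 + 1 = m - 1 from by omega, show m - 2 + 2 = m from by omega,
      show m - 2 + 3 = m + 1 from by omega,
      show m - 1 - (m - 2) = 1 from by omega, show m - (m - 2) = 2 from by omega,
      hβ1, hβ2, one_pow, one_pow] at hT
    have hneg : ((-1 : S)) ^ q ^ m = -1 := by rw [hqe m, neg_one_pow_char_pow]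
    rw [hneg, neg_add_cancel, map_zero, zero_mul, add_zero, map_one, one_mul, pow_one] at hT
    exact hT

theorem stmt_11 (p k n : ℕ) [Fact p.Prime] (hk : 1 ≤ k) (hn : 1 ≤ n)
    (d m q Q : ℕ) (hd : d = Nat.gcd n k) (hm : m = n / d)
    (hq : q = p ^ k) (hQ : Q = p ^ n)
    (A : ℕ → Polynomial (ZMod p)) (hA1 : A 1 = 1) (hA2 : A 2 = -1)
    (hA : ∀ r : ℕ, 1 ≤ r → A (r + 2) = -(A (r + 1)) ^ q - X ^ q * A r ^ q ^ 2)
    (a : GaloisField p n) (ha0 : a ≠ 0)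
    (B : ℕ → GaloisField p n) (hB1 : B 1 = 0)
    (hB : ∀ r : ℕ, 1 ≤ r → B (r + 1) = -a * (aeval a (A r)) ^ q)
    (hma : aeval a (A m) = 0)
    (La F1 G1 : Polynomial (GaloisField p n))
    (hLa : La = X ^ q ^ 2 + X ^ q + C a * X)
    (hF1 : F1 = X ^ q ^ m - C (B m) * X)
    (hG1 : G1 = ∑ i ∈ Finset.Icc 1 (m - 1),
        C ((aeval a (A (m - i))) ^ q ^ i) * X ^ q ^ (i - 1)) :
    F1 = G1.comp La ∧ F1 = La.comp G1 := by
  have hdn : d ∣ n := by rw [hd]; exact Nat.gcd_dvd_left n k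
  have hdk : d ∣ k := by rw [hd]; exact Nat.gcd_dvd_right n k
  have hd0 : 0 < d := Nat.pos_of_ne_zero fun h => by
    subst h; exact absurd (Nat.eq_zero_of_zero_dvd hdn) (by omega)
  have hm1 : 1 ≤ m := by
    rw [hm]; exact (Nat.one_le_div_iff hd0).2 (Nat.le_of_dvd (by omega) hdn)
  have hm3 : 3 ≤ m := by
    rcases (by omega : m = 1 ∨ m = 2 ∨ 3 ≤ m) with h | h | h
    · exfalso; rw [h, hA1, map_one] at hma; exact one_ne_zero hma
    · exfalso; rw [h, hA2] at hma; simp at hma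
    · exact h
  haveI : Fintype (GaloisField p n) := Fintype.ofFinite _
  have hcard : Fintype.card (GaloisField p n) = p ^ n := by
    rw [← Nat.card_eq_fintype_card]; exact GaloisField.card p n (by omega)
  have harith : k * m = n * (k / d) := by
    rw [hm, ← Nat.mul_div_assoc k hdn, ← Nat.mul_div_assoc n hdk, Nat.mul_comm k n]
  have ham : a ^ q ^ m = a := by
    rw [hq, ← pow_mul, harith, pow_mul, ← hcard]
    exact FiniteField.pow_card_pow _ _
  have hrec : ∀ r : ℕ, 1 ≤ r → aeval a (A (r + 2))
      = -(aeval a (A (r + 1))) ^ q - a ^ q * (aeval a (A r)) ^ q ^ 2 := by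
    intro r hr
    have h := congrArg (aeval a) (hA r hr)
    simpa using h
  have hE := auxE hq A hA1 hA2 hA
  have hrecE : ∀ r : ℕ, 1 ≤ r → aeval a (A (r + 2))
      = -(aeval a (A (r + 1))) - a ^ q ^ r * (aeval a (A r)) := by
    intro r hr
    have h := congrArg (aeval a) (hE r hr)
    simpa using h
  have hβ1 : aeval a (A 1) = 1 := by rw [hA1, map_one]
  have hβ2 : aeval a (A 2) = -1 := by rw [hA2]; simp
  have K := mainAux (S := GaloisField p n) hq hm3 a (fun i => aeval a (A i))
    hβ1 hβ2 hma hrec hrecE ham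
  have h1 : (∑ j ∈ Finset.range (m - 1),
      C ((aeval a (A (m - 1 - j))) ^ q ^ (j + 1)) * X ^ q ^ j
        : Polynomial (GaloisField p n)).comp (X ^ q ^ 2 + X ^ q + C a * X)
      = X ^ q ^ m + C (a * (aeval a (A (m - 1))) ^ q) * X := K.1
  have h2 : (X ^ q ^ 2 + X ^ q + C a * X : Polynomial (GaloisField p n)).comp
      (∑ j ∈ Finset.range (m - 1),
        C ((aeval a (A (m - 1 - j))) ^ q ^ (j + 1)) * X ^ q ^ j)
      = X ^ q ^ m + C (a * (aeval a (A (m - 1))) ^ q) * X := K.2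
  have hBm : B m = -a * (aeval a (A (m - 1))) ^ q := by
    have h := hB (m - 1) (by omega)
    rwa [show m - 1 + 1 = m from by omega] at h
  have hG1' : G1 = ∑ j ∈ Finset.range (m - 1),
      C ((aeval a (A (m - 1 - j))) ^ q ^ (j + 1)) * X ^ q ^ j := by
    rw [hG1, show Finset.Icc 1 (m - 1) = Finset.Ico 1 m from by
      rw [← Finset.Ico_add_one_right_eq_Icc]; congr 1; omega]
    rw [Finset.sum_Ico_eq_sum_range]
    refine Finset.sum_congr rfl fun j hj => ?_
    rw [show m - (1 + j) = m - 1 - j from by omega, show 1 + j - 1 = j from by omega,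
      show 1 + j = j + 1 from by omega]
  constructor
  · rw [hF1, hBm, hG1', hLa, h1, neg_mul, map_neg]; ring
  · rw [hF1, hBm, hG1', hLa, h2, neg_mul, map_neg]; ring
end

section
/- Let a ∈ GF(Q)* with A_m(a) = 0. Then the set of all solutions in the algebraic closure of GF(p) to x^{q+1} + x + a = 0 equals { x^{q-1} : x ∈ G_1(G_2(GF(q^N))) } \ {0}. -/
/-!
Write `q = p ^ k`; below `q ^ i` appears as `p ^ (k * i)`. Since
`u * ((u^{q-1})^{q+1} + u^{q-1} + a) = L_a(u)`, the roots of `X^{q+1} + X + a` are the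
`u^{q-1}` with `u ≠ 0` in `ker L_a`, so it suffices to show `G_1 (G_2 (GF(q^N))) = ker L_a`.

The linearized polynomials `G_r = ∑_{i=1}^{r-1} A_{r-i}(a)^{q^i} X^{q^{i-1}}` satisfy
`G_r ∘ L_a = X^{q^r} - A_r(a) X^q - B_r(a) X`, so `A_m(a) = 0` gives `G_1 ∘ L_a = F_1` and
`x^{q^m} = B_m x` on `ker L_a`. Hence multiplication by `B_m` preserves `ker L_a`, which forces
`B_m ∈ GF(q)`; then `F_1` commutes with `L_a`, which is onto, so also `L_a ∘ G_1 = F_1`, and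
counting kernels gives `G_1 (ker F_1) = ker L_a`. Finally `B_m ∈ GF(q) ∩ GF(p^n) = GF(p^d)` is
nonzero, and `G_2` is a telescoping sum mapping `GF(q^N)` onto `ker F_1`.
-/

open Polynomial Finset

theorem AddSubgroup.card_eq_card_ker_mul_card_map {G G' : Type*} [AddGroup G] [AddGroup G']
    (f : G →+ G') {H : AddSubgroup G} (hf : f.ker ≤ H) :
    Nat.card H = Nat.card f.ker * Nat.card (H.map f) := by
  rw [← (f.domRestrict H).ker.card_mul_index, AddSubgroup.index_ker,
    AddMonoidHom.domRestrict_range, AddMonoidHom.ker_domRestrict,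
    Nat.card_congr (AddSubgroup.addSubgroupOfEquivOfLe hf).toEquiv]

/-- `L` maps `ker F` onto `ker g` with kernel `ker L`, and `g` restricted to `ker F` has kernel
`ker g`; comparing both counts of `|ker F|` gives `|g (ker F)| = |ker L|`. -/
theorem AddMonoidHom.map_ker_eq_ker_of_comp_eq {G : Type*} [AddCommGroup G] {L g F : G →+ G}
    (hL : Function.Surjective L) (hgL : g.comp L = F) (hFL : F.comp L = L.comp F)
    [Finite F.ker] : F.ker.map g = L.ker := by
  have hLg : L.comp g = F := by
    ext w
    obtain ⟨x, rfl⟩ := hL w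
    rw [comp_apply, ← comp_apply g L, hgL, ← comp_apply, ← hFL, comp_apply]
  have hLle : L.ker ≤ F.ker := fun x hx => by
    rw [mem_ker, ← hgL, comp_apply, mem_ker.1 hx, map_zero]
  have hgle : g.ker ≤ F.ker := fun x hx => by
    rw [mem_ker, ← hLg, comp_apply, mem_ker.1 hx, map_zero]
  have hmapL : F.ker.map L = g.ker := by
    ext z
    refine ⟨?_, fun hz => ?_⟩
    · rintro ⟨w, hw, rfl⟩
      rw [mem_ker, ← comp_apply, hgL, mem_ker.1 hw]
    · obtain ⟨x, rfl⟩ := hL z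
      refine ⟨x, ?_, rfl⟩
      rw [SetLike.mem_coe, mem_ker, ← hgL, comp_apply, mem_ker.1 hz]
  have hle : F.ker.map g ≤ L.ker := by
    rintro _ ⟨w, hw, rfl⟩
    rw [mem_ker, ← comp_apply, hLg, mem_ker.1 hw]
  have : Finite L.ker := Finite.of_injective _ (AddSubgroup.inclusion_injective hLle)
  have : Finite g.ker := Finite.of_injective _ (AddSubgroup.inclusion_injective hgle)
  refine AddSubgroup.eq_of_le_of_card_ge hle (Nat.le_of_mul_le_mul_left (le_of_eq ?_)
    (Nat.card_pos (α := g.ker)))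
  rw [← AddSubgroup.card_eq_card_ker_mul_card_map g hgle,
    AddSubgroup.card_eq_card_ker_mul_card_map L hLle, hmapL, mul_comm]

namespace RingHom

variable {R : Type*} [CommRing R] (φ : R →+* R) {b : R}

theorem map_sum_pow_mul_iterate_sub (hb : φ b = b) (s : ℕ) (x : R) :
    φ (∑ i ∈ Finset.range s, b ^ (s - 1 - i) * φ^[i] x) -
        b * ∑ i ∈ Finset.range s, b ^ (s - 1 - i) * φ^[i] x = φ^[s] x - b ^ s * x := by
  have htel := sum_range_sub (fun i => b ^ (s - i) * φ^[i] x) s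
  simp only [Nat.sub_self, pow_zero, one_mul, Nat.sub_zero, Function.iterate_zero_apply] at htel
  rw [← htel, map_sum, mul_sum, ← sum_sub_distrib]
  refine sum_congr rfl fun i hi => ?_
  have hsi : s - i = s - 1 - i + 1 := by have := Finset.mem_range.1 hi; omega
  rw [map_mul, map_pow, hb, ← Function.iterate_succ_apply' φ, hsi, pow_succ',
    show s - (i + 1) = s - 1 - i by omega]
  ring

theorem iterate_eq_pow_mul_of_eq_mul (hb : φ b = b) {w : R} (hw : φ w = b * w) (i : ℕ) :
    φ^[i] w = b ^ i * w := by
  induction i with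
  | zero => simp
  | succ i ih =>
    rw [Function.iterate_succ_apply', ih, map_mul, map_pow, hb, hw, pow_succ, mul_assoc]

/-- The preimage of `w` is `-b * w`. -/
theorem image_sum_pow_mul_iterate (hb : φ b = b) {s : ℕ} (hbs : b ^ s = 1) (hs : (s : R) = -1) :
    (fun x => ∑ i ∈ Finset.range s, b ^ (s - 1 - i) * φ^[i] x) '' {x | φ^[s] x = x}
      = {w | φ w = b * w} := by
  ext w
  constructor
  · rintro ⟨x, hx, rfl⟩
    rw [Set.mem_ofPred_eq, ← sub_eq_zero, map_sum_pow_mul_iterate_sub φ hb, hx, hbs, one_mul,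
      sub_self]
  · intro hw
    have hbw : φ (-b * w) = b * (-b * w) := by
      rw [map_mul, map_neg, hb, hw, mul_left_comm]
    refine ⟨-b * w, ?_, ?_⟩
    · rw [Set.mem_ofPred_eq, iterate_eq_pow_mul_of_eq_mul φ hb hbw, ← mul_assoc, hbs, one_mul]
    · simp_rw [iterate_eq_pow_mul_of_eq_mul φ hb hbw]
      calc ∑ i ∈ Finset.range s, b ^ (s - 1 - i) * (b ^ i * (-b * w))
          = ∑ i ∈ Finset.range s, -w := Finset.sum_congr rfl fun i hi => by
            have hsi : s - 1 - i + i + 1 = s := by have := Finset.mem_range.1 hi; omega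
            rw [show b ^ (s - 1 - i) * (b ^ i * (-b * w)) = -(b ^ (s - 1 - i + i + 1) * w) by
              ring, hsi, hbs, one_mul]
        _ = w := by rw [Finset.sum_const, Finset.card_range, nsmul_eq_mul, hs]; ring

end RingHom

noncomputable def laPoly {K : Type*} [Field K] (p k : ℕ) (a : K) : K[X] :=
  X ^ p ^ (k * 2) + X ^ p ^ k + C a * X

theorem natDegree_laPoly {K : Type*} [Field K] {p k : ℕ} (hp : 1 < p) (hk : k ≠ 0) (a : K) :
    (laPoly p k a).natDegree = p ^ (k * 2) := by
  have h1 : 1 < p ^ k := Nat.one_lt_pow hk hp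
  have h2 : p ^ k < p ^ (k * 2) := Nat.pow_lt_pow_right hp (by omega)
  unfold laPoly
  compute_degree!
  · simp [h2.ne', hp.ne', hk]
  all_goals omega

section ExpChar

variable {K : Type*} [Field K] (p : ℕ) [ExpChar K p] (k : ℕ)

def laMap (a : K) : K →+ K :=
  (iterateFrobenius K p (k * 2)).toAddMonoidHom + (iterateFrobenius K p k).toAddMonoidHom +
    AddMonoidHom.mulLeft a

@[simp]
theorem laMap_apply (a x : K) : laMap p k a x = x ^ p ^ (k * 2) + x ^ p ^ k + a * x := rfl

/-- The paper's `F_1` is `frobSubMul p (k * m) (B m)`. -/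
def frobSubMul (n : ℕ) (b : K) : K →+ K :=
  (iterateFrobenius K p n).toAddMonoidHom - AddMonoidHom.mulLeft b

@[simp]
theorem frobSubMul_apply (n : ℕ) (b x : K) : frobSubMul p n b x = x ^ p ^ n - b * x := rfl

/-- The paper's `G_1` is `laCofactor p k (fun r => A_r(a)) (m - 1)`. -/
def laCofactor (α : ℕ → K) : ℕ → K →+ K
  | 0 => 0
  | r + 1 => (iterateFrobenius K p k).toAddMonoidHom.comp (laCofactor α r) +
      AddMonoidHom.mulLeft (α (r + 1) ^ p ^ k)

/-- On `ker L_a`, `x ^ q ^ r = α r * x ^ q + β r * x`; the paper's `A_r(a)`, `B_r(a)` are such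
sequences. -/
structure IsLaRemainderSeq (a : K) (α β : ℕ → K) : Prop where
  α_one : α 1 = 1
  β_one : β 1 = 0
  α_succ : ∀ r ≥ 1, α (r + 1) = β r ^ p ^ k - α r ^ p ^ k
  β_succ : ∀ r ≥ 1, β (r + 1) = -a * α r ^ p ^ k

variable {p k}

@[simp]
theorem eval_laPoly (a x : K) : (laPoly p k a).eval x = laMap p k a x := by
  simp [laPoly]

theorem laCofactor_apply (α : ℕ → K) (r : ℕ) (z : K) :
    laCofactor p k α r z =
      ∑ j ∈ range r, α (r - j) ^ p ^ (k * (j + 1)) * z ^ p ^ (k * j) := by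
  induction r with
  | zero => simp [laCofactor]
  | succ r ih =>
    rw [sum_range_succ']
    simp only [laCofactor, AddMonoidHom.add_apply, AddMonoidHom.coe_comp, Function.comp_apply,
      RingHom.toAddMonoidHom_eq_coe, AddMonoidHom.coe_coe, AddMonoidHom.coe_mulLeft, ih,
      iterateFrobenius_def, sum_pow_char_pow, mul_pow, ← pow_mul, ← pow_add]
    congr 1
    · refine sum_congr rfl fun j _ => ?_
      rw [show r + 1 - (j + 1) = r - j by omega]
      ring_nf
    · simp

theorem laCofactor_apply_eq_sum_Icc (α : ℕ → K) (r : ℕ) (z : K) :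
    laCofactor p k α r z =
      ∑ i ∈ Icc 1 r, α (r + 1 - i) ^ p ^ (k * i) * z ^ p ^ (k * (i - 1)) := by
  rw [laCofactor_apply, ← Ico_add_one_right_eq_Icc, sum_Ico_eq_sum_range, Nat.add_sub_cancel]
  refine sum_congr rfl fun j _ => ?_
  rw [show r + 1 - (1 + j) = r - j by omega, add_comm 1 j, Nat.add_sub_cancel]

theorem laMap_pow_pow {a : K} {n : ℕ} (ha : a ^ p ^ (k * n) = a) (x : K) :
    laMap p k a (x ^ p ^ (k * n)) = laMap p k a x ^ p ^ (k * n) := by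
  simp only [laMap_apply, add_pow_expChar_pow, mul_pow, ← pow_mul, ← pow_add, ha]
  ring_nf

theorem laMap_mul {a b : K} (hb : b ^ p ^ k = b) (x : K) :
    laMap p k a (b * x) = b * laMap p k a x := by
  have hb2 : b ^ p ^ (k * 2) = b := by rw [mul_two, pow_add, pow_mul, hb, hb]
  simp only [laMap_apply, mul_pow, hb, hb2]
  ring

theorem laMap_frobSubMul {a b : K} {n : ℕ} (ha : a ^ p ^ (k * n) = a) (hb : b ^ p ^ k = b)
    (x : K) :
    laMap p k a (frobSubMul p (k * n) b x) = frobSubMul p (k * n) b (laMap p k a x) := by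
  rw [frobSubMul_apply, frobSubMul_apply, map_sub, laMap_pow_pow ha, laMap_mul hb]

theorem isPeriodicPt_frobenius_iff {n : ℕ} {x : K} :
    Function.IsPeriodicPt (frobenius K p) n x ↔ x ^ p ^ n = x := by
  rw [Function.IsPeriodicPt, Function.IsFixedPt, iterate_frobenius]

theorem iterate_iterateFrobenius (n i : ℕ) (x : K) :
    (iterateFrobenius K p n)^[i] x = x ^ p ^ (n * i) := by
  rw [← iterateFrobenius_mul_apply, iterateFrobenius_def]

namespace IsLaRemainderSeq

variable {a : K} {α β : ℕ → K}

theorem laCofactor_laMap (h : IsLaRemainderSeq p k a α β) (r : ℕ) (x : K) :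
    laCofactor p k α r (laMap p k a x)
      = x ^ p ^ (k * (r + 1)) - α (r + 1) * x ^ p ^ k - β (r + 1) * x := by
  induction r with
  | zero => simp [laCofactor, h.α_one, h.β_one]
  | succ r ih =>
    simp only [laCofactor, AddMonoidHom.add_apply, AddMonoidHom.coe_comp, Function.comp_apply,
      RingHom.toAddMonoidHom_eq_coe, AddMonoidHom.coe_coe, AddMonoidHom.coe_mulLeft, ih,
      iterateFrobenius_def]
    simp only [sub_pow_expChar_pow, mul_pow, ← pow_mul, ← pow_add, laMap_apply,
      h.α_succ (r + 1) (by omega), h.β_succ (r + 1) (by omega)]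
    ring_nf

theorem laCofactor_comp_laMap (h : IsLaRemainderSeq p k a α β) {r : ℕ} (hr : α (r + 1) = 0) :
    (laCofactor p k α r).comp (laMap p k a) = frobSubMul p (k * (r + 1)) (β (r + 1)) := by
  ext x
  rw [AddMonoidHom.comp_apply, h.laCofactor_laMap, hr, zero_mul, sub_zero, frobSubMul_apply]

theorem pow_eq_mul_of_laMap_eq_zero (h : IsLaRemainderSeq p k a α β) {r : ℕ}
    (hr : α (r + 1) = 0) {x : K} (hx : laMap p k a x = 0) :
    x ^ p ^ (k * (r + 1)) = β (r + 1) * x := by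
  rw [← sub_eq_zero, ← frobSubMul_apply, ← h.laCofactor_comp_laMap hr,
    AddMonoidHom.comp_apply, hx, map_zero]

end IsLaRemainderSeq

theorem isLaRemainderSeq_aeval {R : Type*} [CommRing R] [Algebra R K] {A : ℕ → R[X]}
    (hA1 : A 1 = 1) (hA2 : A 2 = -1)
    (hA : ∀ r ≥ 1, A (r + 2) = -A (r + 1) ^ p ^ k - X ^ p ^ k * A r ^ p ^ (k * 2))
    {a : K} {B : ℕ → K} (hB1 : B 1 = 0)
    (hB : ∀ r ≥ 1, B (r + 1) = -a * aeval a (A r) ^ p ^ k) :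
    IsLaRemainderSeq p k a (fun r => aeval a (A r)) B where
  α_one := by simp [hA1]
  β_one := hB1
  α_succ r hr := by
    obtain ⟨s, rfl⟩ : ∃ s, r = s + 1 := ⟨r - 1, by omega⟩
    rcases Nat.eq_zero_or_pos s with rfl | hs
    · simp [hA1, hA2, hB1, zero_pow (expChar_pow_pos K p k).ne']
    · have hneg (y : K) : (-y) ^ p ^ k = -y ^ p ^ k := map_neg (iterateFrobenius K p k) y
      rw [hA s hs, hB s hs, neg_mul, hneg]
      simp only [map_sub, map_neg, map_mul, map_pow, aeval_X, mul_pow, ← pow_mul, ← pow_add]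
      ring_nf
  β_succ := hB

end ExpChar

section CharP

variable {K : Type*} [Field K] {p k : ℕ} [Fact p.Prime] [CharP K p]

theorem laMap_surjective [IsAlgClosed K] (hk : k ≠ 0) (a : K) :
    Function.Surjective (laMap p k a) := fun z => by
  obtain ⟨x, hx⟩ := IsAlgClosed.eval_surjective (p := laPoly p k a)
    (by rw [natDegree_laPoly (Fact.out : p.Prime).one_lt hk]; exact (expChar_pow_pos K p _).ne')
    z
  exact ⟨x, by simpa using hx⟩

theorem ncard_setOf_laMap_eq_zero [IsAlgClosed K] (hk : k ≠ 0) {a : K} (ha : a ≠ 0) :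
    {x | laMap p k a x = 0}.ncard = p ^ (k * 2) := by
  have hdeg := natDegree_laPoly (Fact.out : p.Prime).one_lt hk a
  have hP0 : laPoly p k a ≠ 0 := by
    rintro h; rw [h, natDegree_zero] at hdeg; exact (pow_pos (Fact.out : p.Prime).pos _).ne hdeg
  have hsep : (laPoly p k a).Separable := by
    have hderiv : derivative (laPoly p k a) = C a := by
      simp [laPoly, derivative_X_pow, CharP.cast_eq_zero, hk]
    rw [separable_def, hderiv]
    exact ⟨0, C a⁻¹, by rw [← C_mul, inv_mul_cancel₀ ha, C_1, zero_mul, zero_add]⟩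
  have hset : {x | laMap p k a x = 0} = (laPoly p k a).rootSet K := by
    ext x; simp [mem_rootSet, hP0]
  rw [hset, ← Nat.card_coe_set_eq, Nat.card_eq_fintype_card,
    card_rootSet_eq_natDegree hsep (IsAlgClosed.splits _), hdeg]

/-- Otherwise, with `c = b ^ q - b`, all of `ker L_a` would be roots of
`c^q X^q + (c^q + c) a X`, which has at most `q < q ^ 2` of them. -/
theorem pow_eq_self_of_forall_mul_mem [IsAlgClosed K] (hk : k ≠ 0) {a b : K} (ha : a ≠ 0)
    (hb : ∀ x, laMap p k a x = 0 → laMap p k a (b * x) = 0) : b ^ p ^ k = b := by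
  by_contra hc
  set c := b ^ p ^ k - b
  have hc0 : c ^ p ^ k ≠ 0 := pow_ne_zero _ (sub_ne_zero.2 hc)
  set P : K[X] := C (c ^ p ^ k) * X ^ p ^ k + C ((c ^ p ^ k + c) * a) * X
  have hq1 : 1 < p ^ k := Nat.one_lt_pow hk (Fact.out : p.Prime).one_lt
  have hP0 : P ≠ 0 := fun h => hc0 <| by
    simpa only [P, coeff_add, coeff_C_mul_X_pow, coeff_C_mul_X, if_neg hq1.ne', if_true,
      add_zero, coeff_zero] using congrArg (coeff · (p ^ k)) h
  have hdeg : P.natDegree ≤ p ^ k := by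
    unfold P; compute_degree; omega
  have hsub : {x | laMap p k a x = 0} ⊆ P.rootSet K := fun x hx => by
    have hbx := hb x hx
    have hcq : c ^ p ^ k = b ^ p ^ (k * 2) - b ^ p ^ k := by
      rw [sub_pow_expChar_pow, ← pow_mul, ← pow_add, mul_two]
    simp only [Set.mem_ofPred_eq, laMap_apply, mul_pow] at hx hbx
    rw [mem_rootSet_of_ne hP0, coe_aeval_eq_eval]
    simp only [P, eval_add, eval_mul, eval_C, eval_pow, eval_X, hcq, c]
    linear_combination b ^ p ^ (k * 2) * hx - hbx
  have := (Set.ncard_le_ncard hsub (P.rootSet_finite K)).trans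
    ((P.ncard_rootSet_le K).trans hdeg)
  rw [ncard_setOf_laMap_eq_zero hk ha, pow_mul] at this
  nlinarith

theorem finite_ker_frobSubMul {n : ℕ} (hn : n ≠ 0) (b : K) : Finite (frobSubMul p n b).ker := by
  have hq1 : p ^ n ≠ 1 := (Nat.one_lt_pow hn (Fact.out : p.Prime).one_lt).ne'
  have hP0 : (X ^ p ^ n - C b * X : K[X]) ≠ 0 := fun h => one_ne_zero <| by
    simpa only [coeff_sub, coeff_X_pow_self, coeff_C_mul_X, if_neg hq1, sub_zero, coeff_zero]
      using congrArg (coeff · (p ^ n)) h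
  refine Set.Finite.to_subtype ((finite_setOfPred_isRoot hP0).subset fun x hx => ?_)
  simpa [sub_eq_zero] using hx

theorem IsLaRemainderSeq.image_laCofactor [IsAlgClosed K] {a : K} {α β : ℕ → K}
    (h : IsLaRemainderSeq p k a α β) (hk : k ≠ 0) {r : ℕ} (hr : α (r + 1) = 0)
    (ha : a ^ p ^ (k * (r + 1)) = a) (hb : β (r + 1) ^ p ^ k = β (r + 1)) :
    laCofactor p k α r '' {w | w ^ p ^ (k * (r + 1)) = β (r + 1) * w}
      = {x | laMap p k a x = 0} := by
  have := finite_ker_frobSubMul (p := p) (mul_ne_zero hk r.succ_ne_zero) (β (r + 1))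
  have key := AddMonoidHom.map_ker_eq_ker_of_comp_eq (laMap_surjective hk a)
    (h.laCofactor_comp_laMap hr) (AddMonoidHom.ext fun x => (laMap_frobSubMul ha hb x).symm)
  simpa [Set.ext_iff, sub_eq_zero] using congrArg (fun H : AddSubgroup K => (H : Set K)) key

theorem exists_ne_zero_laMap_eq_zero [IsAlgClosed K] (hk : k ≠ 0) {a : K} (ha : a ≠ 0) :
    ∃ x ≠ 0, laMap p k a x = 0 := by
  have h1 : 1 < p ^ (k * 2) := Nat.one_lt_pow (by omega) (Fact.out : p.Prime).one_lt
  obtain ⟨x, hx, hx0⟩ := Set.exists_ne_of_one_lt_ncard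
    (ncard_setOf_laMap_eq_zero (p := p) hk ha ▸ h1) 0
  exact ⟨x, hx0, hx⟩

namespace IsLaRemainderSeq

variable [IsAlgClosed K] {a : K} {α β : ℕ → K} {r : ℕ}

theorem β_pow_eq_self (h : IsLaRemainderSeq p k a α β) (hk : k ≠ 0) (ha : a ≠ 0)
    (hr : α (r + 1) = 0) (har : a ^ p ^ (k * (r + 1)) = a) : β (r + 1) ^ p ^ k = β (r + 1) :=
  pow_eq_self_of_forall_mul_mem hk ha fun x hx => by
    rw [← h.pow_eq_mul_of_laMap_eq_zero hr hx, laMap_pow_pow har, hx,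
      zero_pow (expChar_pow_pos K p _).ne']

theorem β_ne_zero (h : IsLaRemainderSeq p k a α β) (hk : k ≠ 0) (ha : a ≠ 0)
    (hr : α (r + 1) = 0) : β (r + 1) ≠ 0 := by
  obtain ⟨x, hx0, hx⟩ := exists_ne_zero_laMap_eq_zero hk ha
  refine fun h0 => hx0 (pow_eq_zero_iff (expChar_pow_pos K p (k * (r + 1))).ne' |>.1 ?_)
  rw [h.pow_eq_mul_of_laMap_eq_zero hr hx, h0, zero_mul]

end IsLaRemainderSeq

theorem pow_pow_gcd_sub_one_eq_one {x : K} (hx : x ≠ 0) {n j : ℕ}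
    (hn : Function.IsPeriodicPt (frobenius K p) n x)
    (hj : Function.IsPeriodicPt (frobenius K p) j x) : x ^ (p ^ n.gcd j - 1) = 1 := by
  refine (mul_eq_left₀ hx).1 ?_
  rw [← pow_succ', Nat.sub_add_cancel (Nat.one_le_pow _ _ (Fact.out : p.Prime).pos),
    isPeriodicPt_frobenius_iff.1 (hn.gcd hj)]

theorem image_sum_pow_mul_pow_pow {b : K} {n j : ℕ} (hj : j ≠ 0) (hb : b ^ p ^ n = b)
    (hbj : b ^ (p ^ j - 1) = 1) :
    (fun x => ∑ i ∈ range (p ^ j - 1), b ^ (p ^ j - 1 - 1 - i) * x ^ p ^ (n * i)) ''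
      {x | x ^ p ^ (n * (p ^ j - 1)) = x} = {w | w ^ p ^ n = b * w} := by
  have hcast : ((p ^ j - 1 : ℕ) : K) = -1 := by
    rw [Nat.cast_sub (Nat.one_le_pow _ _ (Fact.out : p.Prime).pos), Nat.cast_pow,
      CharP.cast_eq_zero, zero_pow hj, Nat.cast_one, zero_sub]
  simpa only [iterate_iterateFrobenius, iterateFrobenius_def]
    using (iterateFrobenius K p n).image_sum_pow_mul_iterate hb hbj hcast

theorem setOf_pow_add_eq_image [IsAlgClosed K] (hk : k ≠ 0) {a : K} (ha : a ≠ 0) :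
    {y : K | y ^ (p ^ k + 1) + y + a = 0} =
      (· ^ (p ^ k - 1)) '' {u | laMap p k a u = 0} \ {0} := by
  obtain ⟨t, ht⟩ : ∃ t, p ^ k = t + 2 :=
    ⟨p ^ k - 2, by have := Nat.one_lt_pow hk (Fact.out : p.Prime).one_lt; omega⟩
  have hmul (u : K) : u * ((u ^ (p ^ k - 1)) ^ (p ^ k + 1) + u ^ (p ^ k - 1) + a)
      = laMap p k a u := by
    rw [laMap_apply, pow_mul, ht, show t + 2 - 1 = t + 1 by omega]; ring
  ext y
  constructor
  · intro hy
    have hy0 : y ≠ 0 := by rintro rfl; simp [ht, ha] at hy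
    obtain ⟨u, rfl⟩ := IsAlgClosed.exists_pow_nat_eq y (show 0 < p ^ k - 1 by omega)
    exact ⟨⟨u, by rw [Set.mem_ofPred_eq, ← hmul, hy, mul_zero], rfl⟩, hy0⟩
  · rintro ⟨⟨u, hu, rfl⟩, hy0⟩
    have hu0 : u ≠ 0 := by rintro rfl; simp [ht] at hy0
    exact (mul_eq_zero.1 ((hmul u).trans hu)).resolve_left hu0

end CharP

theorem isPeriodicPt_frobenius_aeval {K : Type*} [Field K] {p : ℕ} [Fact p.Prime] [CharP K p]
    [Algebra (ZMod p) K] (P : (ZMod p)[X]) {n : ℕ} {x : K}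
    (hx : Function.IsPeriodicPt (frobenius K p) n x) :
    Function.IsPeriodicPt (frobenius K p) n (aeval x P) :=
  hx.map (g := fun y => aeval y P) fun y => by
    simp only [frobenius_def, ← map_pow, ← ZMod.expand_card, expand_aeval]

theorem stmt_14 (p k n : ℕ) [Fact p.Prime] (hk : 1 ≤ k) (hn : 1 ≤ n)
    (d m q Q N : ℕ) (hd : d = Nat.gcd n k) (hm : m = n / d)
    (hq : q = p ^ k) (hQ : Q = p ^ n) (hN : N = m * (p ^ d - 1))
    (A : ℕ → Polynomial (ZMod p)) (hA1 : A 1 = 1) (hA2 : A 2 = -1)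
    (hA : ∀ r : ℕ, 1 ≤ r → A (r + 2) = -(A (r + 1)) ^ q - X ^ q * A r ^ q ^ 2)
    (a : AlgebraicClosure (ZMod p)) (haQ : a ^ Q = a) (ha0 : a ≠ 0)
    (B : ℕ → AlgebraicClosure (ZMod p)) (hB1 : B 1 = 0)
    (hB : ∀ r : ℕ, 1 ≤ r → B (r + 1) = -a * (aeval a (A r)) ^ q)
    (hma : aeval a (A m) = 0)
    (g1 g2 : AlgebraicClosure (ZMod p) → AlgebraicClosure (ZMod p))
    (hg1 : ∀ x, g1 x = ∑ i ∈ Finset.Icc 1 (m - 1),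
        (aeval a (A (m - i))) ^ q ^ i * x ^ q ^ (i - 1))
    (hg2 : ∀ x, g2 x = ∑ i ∈ Finset.range (p ^ d - 1),
        B m ^ (p ^ d - 2 - i) * x ^ q ^ (m * i)) :
    {x : AlgebraicClosure (ZMod p) | x ^ (q + 1) + x + a = 0} =
      {y : AlgebraicClosure (ZMod p) | ∃ x : AlgebraicClosure (ZMod p),
        x ^ q ^ N = x ∧ y = (g1 (g2 x)) ^ (q - 1)} \ {0} := by
  subst hq hQ hN
  simp only [← pow_mul, ← mul_assoc] at hA hg1 hg2 ⊢
  have hk0 : k ≠ 0 := by omega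
  have hd0 : d ≠ 0 := hd ▸ (Nat.gcd_pos_of_pos_left k hn).ne'
  have hseq := isLaRemainderSeq_aeval (K := AlgebraicClosure (ZMod p)) hA1 hA2 hA hB1 hB
  obtain ⟨r, rfl⟩ : ∃ r, m = r + 1 :=
    ⟨m - 1, by
      have := Nat.div_pos (Nat.le_of_dvd hn (hd ▸ Nat.gcd_dvd_left n k)) (Nat.pos_of_ne_zero hd0)
      omega⟩
  have hr : 1 ≤ r := Nat.one_le_iff_ne_zero.2 fun h => by simp [h, hA1] at hma
  have ha := isPeriodicPt_frobenius_iff (K := AlgebraicClosure (ZMod p)) (p := p) |>.2 haQ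
  have har : a ^ p ^ (k * (r + 1)) = a := isPeriodicPt_frobenius_iff.1 <| ha.trans_dvd
    ⟨k / d, by rw [hm, hd, ← Nat.mul_div_assoc _ (Nat.gcd_dvd_left n k),
      ← Nat.mul_div_assoc _ (Nat.gcd_dvd_right n k), mul_comm]⟩
  have hBq := hseq.β_pow_eq_self hk0 ha0 hma har
  -- `B m = (-X * A (m - 1) ^ q)(a)` lies in `GF(p^n)` because `a` does
  have hBn := isPeriodicPt_frobenius_aeval (-X * A r ^ p ^ k) ha
  simp only [map_mul, map_neg, aeval_X, map_pow, ← hB r hr] at hBn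
  have hBd := hd ▸ pow_pow_gcd_sub_one_eq_one (hseq.β_ne_zero hk0 ha0 hma) hBn
    (isPeriodicPt_frobenius_iff.2 hBq)
  have hg2_eq : g2 = fun x => ∑ i ∈ range (p ^ d - 1),
      B (r + 1) ^ (p ^ d - 1 - 1 - i) * x ^ p ^ (k * (r + 1) * i) :=
    funext fun x => by simp only [hg2, Nat.sub_sub]
  have hg1_eq : g1 = laCofactor p k (fun r => aeval a (A r)) r := funext fun x => by
    rw [hg1, Nat.add_sub_cancel, laCofactor_apply_eq_sum_Icc]
  rw [setOf_pow_add_eq_image hk0 ha0, ← hseq.image_laCofactor hk0 hma har hBq, ← hg1_eq,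
    ← image_sum_pow_mul_pow_pow hd0 (isPeriodicPt_frobenius_iff.1
      ((isPeriodicPt_frobenius_iff.2 hBq).mul_const (r + 1))) hBd, ← hg2_eq]
  ext y
  simp [eq_comm]
end

section
/- Let a ∈ GF(Q)* with A_m(a) = 0. Then the equation L_a(x) = 0 has a solution x ∈ GF(Q)* if and only if B_m(a) = 1. -/
open Polynomial

theorem key_id (p k q : ℕ) [Fact p.Prime] (hq : q = p ^ k)
    (A : ℕ → Polynomial (ZMod p))
    (hA1 : A 1 = 1) (hA2 : A 2 = -1)
    (hA : ∀ r : ℕ, 1 ≤ r → A (r + 2) = -(A (r + 1)) ^ q - X ^ q * A r ^ q ^ 2)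
    (a : AlgebraicClosure (ZMod p))
    (B : ℕ → AlgebraicClosure (ZMod p)) (hB1 : B 1 = 0)
    (hB : ∀ r : ℕ, 1 ≤ r → B (r + 1) = -a * (aeval a (A r)) ^ q)
    (x : AlgebraicClosure (ZMod p)) (hx : x ^ q ^ 2 + x ^ q + a * x = 0) :
    ∀ r : ℕ, 1 ≤ r → x ^ q ^ r = aeval a (A r) * x ^ q + B r * x := by
  have hqd : ∀ u : AlgebraicClosure (ZMod p),
      u ^ q = iterateFrobenius (AlgebraicClosure (ZMod p)) p k u := fun u => by
    rw [iterateFrobenius_def, hq]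
  have frob : ∀ u v : AlgebraicClosure (ZMod p), (u + v) ^ q = u ^ q + v ^ q := fun u v => by
    simp only [hqd, map_add]
  have frobneg : ∀ u : AlgebraicClosure (ZMod p), (-u) ^ q = -(u ^ q) := fun u => by
    simp only [hqd, map_neg]
  have hx2 : x ^ q ^ 2 = -(x ^ q) - a * x := by linear_combination hx
  have P : ∀ s : ℕ, x ^ q ^ (s+1) = aeval a (A (s+1)) * x ^ q + B (s+1) * x ∧
      x ^ q ^ (s+2) = aeval a (A (s+2)) * x ^ q + B (s+2) * x := by
    intro s
    induction s with
    | zero =>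
      constructor
      · rw [hA1, hB1]; simp [pow_one]
      · have hB2 : B 2 = -a := by
          have h := hB 1 le_rfl
          rw [hA1] at h
          simpa using h
        rw [hx2, hA2, hB2]; simp; ring
    | succ s ih =>
      obtain ⟨ih1, ih2⟩ := ih
      refine ⟨ih2, ?_⟩
      have step : x ^ q ^ (s + 1 + 2) = (x ^ q ^ (s + 2)) ^ q := by
        rw [← pow_mul]
        congr 1
      rw [step, ih2, frob, mul_pow, mul_pow, ← pow_mul, ← pow_two, hx2]
      have hAr : aeval a (A (s + 1 + 2)) =
          -(aeval a (A (s + 1 + 1))) ^ q - a ^ q * (aeval a (A (s + 1))) ^ q ^ 2 := by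
        rw [hA (s + 1) (by omega)]
        simp [map_pow]
      have hBr2 : B (s + 1 + 1) = -a * (aeval a (A (s + 1))) ^ q := hB (s + 1) (by omega)
      have hBr3 : B (s + 1 + 2) = -a * (aeval a (A (s + 1 + 1))) ^ q := hB (s + 2) (by omega)
      have hBq : (B (s + 1 + 1)) ^ q = -(a ^ q) * ((aeval a (A (s + 1))) ^ q) ^ q := by
        rw [hBr2, mul_pow, frobneg]
      rw [hBq, hAr, hBr3, ← pow_mul, pow_two]
      ring
  intro r hr
  obtain ⟨s, rfl⟩ : ∃ s, r = s + 1 := ⟨r - 1, by omega⟩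
  exact (P s).1

set_option maxHeartbeats 1000000

theorem stmt_15 (p k n : ℕ) [Fact p.Prime] (hk : 1 ≤ k) (hn : 1 ≤ n)
    (d m q Q : ℕ) (hd : d = Nat.gcd n k) (hm : m = n / d)
    (hq : q = p ^ k) (hQ : Q = p ^ n)
    (A : ℕ → Polynomial (ZMod p)) (hA1 : A 1 = 1) (hA2 : A 2 = -1)
    (hA : ∀ r : ℕ, 1 ≤ r → A (r + 2) = -(A (r + 1)) ^ q - X ^ q * A r ^ q ^ 2)
    (a : AlgebraicClosure (ZMod p)) (haQ : a ^ Q = a) (ha0 : a ≠ 0)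
    (B : ℕ → AlgebraicClosure (ZMod p)) (hB1 : B 1 = 0)
    (hB : ∀ r : ℕ, 1 ≤ r → B (r + 1) = -a * (aeval a (A r)) ^ q)
    (hma : aeval a (A m) = 0) :
    (∃ x : AlgebraicClosure (ZMod p), x ^ Q = x ∧ x ≠ 0 ∧
        x ^ q ^ 2 + x ^ q + a * x = 0) ↔ B m = 1 := by
  have key := key_id p k q hq A hA1 hA2 hA a B hB1 hB
  have hp2 : 2 ≤ p := (Fact.out : p.Prime).two_le
  have hdn : d ∣ n := hd ▸ Nat.gcd_dvd_left n k
  have hdk : d ∣ k := hd ▸ Nat.gcd_dvd_right n k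
  have hd0 : 0 < d := by
    rcases Nat.eq_zero_or_pos d with h | h
    · exfalso; rw [h] at hdn; omega
    · exact h
  set e := k / d with he
  have hm1 : 1 ≤ m := by
    rw [hm]; exact Nat.div_pos (Nat.le_of_dvd (by omega) hdn) hd0
  have he1 : 1 ≤ e := by
    rw [he]; exact Nat.div_pos (Nat.le_of_dvd (by omega) hdk) hd0
  have hne : n * e = k * m := by
    rw [hm, he, ← Nat.mul_div_assoc n hdk, ← Nat.mul_div_assoc k hdn, Nat.mul_comm n k]
  have hqm : q ^ m = (p ^ n) ^ e := by
    rw [hq, ← pow_mul, ← pow_mul, hne]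
  have hq2 : 2 ≤ q := by
    rw [hq]; calc 2 ≤ p := hp2
    _ = p ^ 1 := (pow_one p).symm
    _ ≤ p ^ k := Nat.pow_le_pow_right (by omega) hk
  have hq4 : 4 ≤ q ^ 2 := by nlinarith
  have hqq : q < q ^ 2 := by nlinarith
  have hq0 : q ≠ 0 := by omega
  have hq20 : q ^ 2 ≠ 0 := pow_ne_zero 2 hq0
  have hpn0 : p ^ n ≠ 0 := pow_ne_zero n (by omega)
  -- x in GF(Q) implies x ^ q ^ m = x
  have hfixQ : ∀ x : AlgebraicClosure (ZMod p), x ^ Q = x → x ^ q ^ m = x := by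
    intro x hx
    rw [hqm]
    rw [hQ] at hx
    induction e with
    | zero => simp
    | succ j ih => rw [pow_succ, pow_mul, ih, hx]
  constructor
  · rintro ⟨x, hxQ, hx0, hxL⟩
    have h1 : x ^ q ^ m = B m * x := by
      rw [key x hxL m hm1, hma]; ring
    have h2 : x ^ q ^ m = x := hfixQ x hxQ
    have : B m * x = 1 * x := by rw [one_mul, ← h1, h2]
    exact mul_right_cancel₀ hx0 this
  · intro hBm
    -- a nonzero root x₀ of the equation
    obtain ⟨x₀, hx00, hx0K⟩ : ∃ z : AlgebraicClosure (ZMod p), z ≠ 0 ∧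
        z ^ q ^ 2 + z ^ q + a * z = 0 := by
      set g : (AlgebraicClosure (ZMod p))[X] := X ^ (q ^ 2 - 1) + (X ^ (q - 1) + C a) with hg
      have hcast : ∀ s t : ℕ, s < t → ((s : ℕ) : WithBot ℕ) < ((t : ℕ) : WithBot ℕ) := by
        intro s t hst; exact_mod_cast hst
      have hdeg2 : (X ^ (q - 1) + C a : (AlgebraicClosure (ZMod p))[X]).degree
          < ((q ^ 2 - 1 : ℕ) : WithBot ℕ) := by
        apply lt_of_le_of_lt (Polynomial.degree_add_le _ _)
        rw [max_lt_iff]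
        refine ⟨?_, ?_⟩
        · rw [degree_X_pow]; exact hcast _ _ (by omega)
        · apply lt_of_le_of_lt degree_C_le
          have : ((0 : ℕ) : WithBot ℕ) < ((q ^ 2 - 1 : ℕ) : WithBot ℕ) := hcast _ _ (by omega)
          simpa using this
      have hgdeg : g.degree = ((q ^ 2 - 1 : ℕ) : WithBot ℕ) := by
        rw [hg, degree_add_eq_left_of_degree_lt, degree_X_pow]
        rw [degree_X_pow]; exact hdeg2
      obtain ⟨z, hz⟩ := IsAlgClosed.exists_root g (by
        rw [hgdeg]
        intro hcon
        have h0 : ((q ^ 2 - 1 : ℕ) : WithBot ℕ) = ((0 : ℕ) : WithBot ℕ) := by simpa using hcon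
        have := Nat.cast_injective (R := WithBot ℕ) h0
        omega)
      have hzeval : z ^ (q ^ 2 - 1) + z ^ (q - 1) + a = 0 := by
        have h2 := hz
        rw [IsRoot.def, hg] at h2
        simpa [add_assoc] using h2
      have hz0 : z ≠ 0 := by
        intro h
        rw [h, zero_pow (by omega : q ^ 2 - 1 ≠ 0), zero_pow (by omega : q - 1 ≠ 0)] at hzeval
        simp at hzeval
        exact ha0 hzeval
      refine ⟨z, hz0, ?_⟩
      have e1 : z ^ (q ^ 2) = z ^ (q ^ 2 - 1) * z := by
        rw [← pow_succ]; congr 1; omega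
      have e2 : z ^ q = z ^ (q - 1) * z := by
        rw [← pow_succ]; congr 1; omega
      rw [e1, e2]
      linear_combination z * hzeval
    -- Frobenius helpers
    have hqd : ∀ (j : ℕ) (u : AlgebraicClosure (ZMod p)),
        u ^ p ^ j = iterateFrobenius (AlgebraicClosure (ZMod p)) p j u := fun j u => by
      rw [iterateFrobenius_def]
    have frobq : ∀ u v : AlgebraicClosure (ZMod p), (u + v) ^ q = u ^ q + v ^ q := fun u v => by
      rw [hq]; simp only [hqd, map_add]
    have frobpn : ∀ u v : AlgebraicClosure (ZMod p),
        (u + v) ^ p ^ n = u ^ p ^ n + v ^ p ^ n := fun u v => by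
      simp only [hqd, map_add]
    have eq2 : ∀ w : AlgebraicClosure (ZMod p), w ^ q ^ 2 = (w ^ q) ^ q := fun w => by
      rw [← pow_mul, pow_two]
    -- closure properties of the root set
    have hK0 : (0 : AlgebraicClosure (ZMod p)) ^ q ^ 2 + 0 ^ q + a * 0 = 0 := by
      rw [zero_pow hq20, zero_pow hq0]; ring
    have hKadd : ∀ u v : AlgebraicClosure (ZMod p),
        u ^ q ^ 2 + u ^ q + a * u = 0 → v ^ q ^ 2 + v ^ q + a * v = 0 →
        (u + v) ^ q ^ 2 + (u + v) ^ q + a * (u + v) = 0 := by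
      intro u v hu hv
      have h2 : (u + v) ^ q ^ 2 = u ^ q ^ 2 + v ^ q ^ 2 := by
        rw [eq2, frobq, frobq, ← eq2, ← eq2]
      rw [h2, frobq]
      linear_combination hu + hv
    have hKmul : ∀ (c x : AlgebraicClosure (ZMod p)), c ^ q = c →
        x ^ q ^ 2 + x ^ q + a * x = 0 →
        (c * x) ^ q ^ 2 + (c * x) ^ q + a * (c * x) = 0 := by
      intro c x hc hx
      have hc2 : c ^ q ^ 2 = c := by rw [eq2, hc, hc]
      rw [mul_pow, mul_pow, hc2, hc]
      linear_combination c * hx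
    have hKpn : ∀ x : AlgebraicClosure (ZMod p), x ^ q ^ 2 + x ^ q + a * x = 0 →
        (x ^ p ^ n) ^ q ^ 2 + (x ^ p ^ n) ^ q + a * x ^ p ^ n = 0 := by
      intro x hx
      have h : (x ^ q ^ 2 + x ^ q + a * x) ^ p ^ n = 0 := by rw [hx]; exact zero_pow hpn0
      rw [frobpn, frobpn, mul_pow] at h
      rw [pow_right_comm x (p ^ n) (q ^ 2), pow_right_comm x (p ^ n) q]
      rw [hQ] at haQ
      rw [← haQ]
      exact h
    have hKiter : ∀ x : AlgebraicClosure (ZMod p), x ^ q ^ 2 + x ^ q + a * x = 0 →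
        ∀ i : ℕ, (x ^ p ^ (n * i)) ^ q ^ 2 + (x ^ p ^ (n * i)) ^ q + a * x ^ p ^ (n * i) = 0 := by
      intro x hx i
      induction i with
      | zero => simpa using hx
      | succ i ih =>
        have hstep : x ^ p ^ (n * (i + 1)) = (x ^ p ^ (n * i)) ^ p ^ n := by
          rw [← pow_mul, ← pow_add, Nat.mul_add, Nat.mul_one]
        rw [hstep]
        exact hKpn _ ih
    have hKfix : ∀ x : AlgebraicClosure (ZMod p), x ^ q ^ 2 + x ^ q + a * x = 0 →
        x ^ p ^ (n * e) = x := by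
      intro x hx
      have h : x ^ q ^ m = x := by rw [key x hx m hm1, hma, hBm]; ring
      have hexp : p ^ (n * e) = q ^ m := by rw [hqm, ← pow_mul]
      rw [hexp, h]
    -- the finite field GF(q) inside the algebraic closure
    haveI : Fintype (GaloisField p k) := Fintype.ofFinite _
    have hcard : Fintype.card (GaloisField p k) = p ^ k := by
      rw [← Nat.card_eq_fintype_card]; exact GaloisField.card p k (by omega)
    obtain ⟨ι, -⟩ : ∃ f : GaloisField p k →+* AlgebraicClosure (ZMod p), True :=
      ⟨(IsAlgClosed.lift (M := AlgebraicClosure (ZMod p)) :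
          GaloisField p k →ₐ[ZMod p] AlgebraicClosure (ZMod p)).toRingHom, trivial⟩
    have ιinj : Function.Injective ι := RingHom.injective ι
    have hιq : ∀ c : GaloisField p k, (ι c) ^ q = ι c := by
      intro c
      have h : c ^ p ^ k = c := by rw [← hcard]; exact FiniteField.pow_card c
      rw [hq, ← map_pow, h]
    -- reduction of Frobenius powers mod k on GF(q)
    have hmod : ∀ c : AlgebraicClosure (ZMod p), c ^ q = c →
        ∀ j : ℕ, c ^ p ^ j = c ^ p ^ (j % k) := by
      intro c hc j
      have hper : ∀ t : ℕ, c ^ p ^ (k * t) = c := by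
        intro t
        induction t with
        | zero => simp
        | succ t ih =>
          rw [Nat.mul_add, Nat.mul_one, pow_add, pow_mul, ih, ← hq, hc]
      conv_lhs => rw [← Nat.div_add_mod j k, pow_add, pow_mul, hper (j / k)]
    -- exponents n*i mod k are nonzero for 1 ≤ i < e
    have hdist : ∀ i : ℕ, 1 ≤ i → i < e → (n * i) % k ≠ 0 := by
      intro i h1 h2 hcon
      have hk2 : k ∣ n * i := Nat.dvd_of_mod_eq_zero hcon
      have hkde : k = d * e := by rw [he, Nat.mul_div_cancel' hdk]
      have hnd : n = d * (n / d) := (Nat.mul_div_cancel' hdn).symm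
      have hcop : Nat.Coprime (n / d) e := by
        rw [he, hd]
        exact Nat.coprime_div_gcd_div_gcd (hd ▸ hd0)
      have h3 : d * e ∣ d * ((n / d) * i) := by
        rw [← Nat.mul_assoc, ← hnd, ← hkde]
        exact hk2
      have h4 : e ∣ (n / d) * i := (Nat.mul_dvd_mul_iff_left hd0).mp h3
      have h5 : e ∣ i := (Nat.Coprime.symm hcop).dvd_of_dvd_mul_left h4
      have := Nat.le_of_dvd (by omega) h5
      omega
    -- choose c in GF(q) giving a nonzero trace-like sum
    have hchoice : ∃ c : GaloisField p k,
        (∑ i ∈ Finset.range e, (ι c * x₀) ^ p ^ (n * i)) ≠ 0 := by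
      by_contra hcon
      push_neg at hcon
      set g : (AlgebraicClosure (ZMod p))[X] :=
        ∑ i ∈ Finset.range e, C (x₀ ^ p ^ (n * i)) * X ^ (p ^ ((n * i) % k)) with hg
      have hgeval : ∀ c : GaloisField p k, g.eval (ι c) = 0 := by
        intro c
        rw [hg, Polynomial.eval_finset_sum]
        have hterm : ∀ i ∈ Finset.range e,
            (C (x₀ ^ p ^ (n * i)) * X ^ p ^ (n * i % k)).eval (ι c)
            = (ι c * x₀) ^ p ^ (n * i) := by
          intro i _
          rw [eval_mul, eval_C, eval_pow, eval_X, mul_pow]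
          rw [← hmod (ι c) (hιq c) (n * i)]
          ring
        rw [Finset.sum_congr rfl hterm]
        exact hcon c
      have hgdeg : g.natDegree < Fintype.card (GaloisField p k) := by
        rw [hcard]
        have hb : g.natDegree ≤ p ^ (k - 1) := by
          rw [hg]
          apply Polynomial.natDegree_sum_le_of_forall_le
          intro i _
          apply le_trans (Polynomial.natDegree_mul_le)
          rw [natDegree_C, natDegree_X_pow]
          have : n * i % k < k := Nat.mod_lt _ (by omega)
          simpa using Nat.pow_le_pow_right (by omega) (by omega)
        calc g.natDegree ≤ p ^ (k - 1) := hb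
          _ < p ^ k := Nat.pow_lt_pow_right (by omega) (by omega)
      have hg0 : g = 0 :=
        Polynomial.eq_zero_of_natDegree_lt_card_of_eval_eq_zero g ιinj hgeval hgdeg
      have hc1 : g.coeff 1 = x₀ := by
        rw [hg, Polynomial.finset_sum_coeff]
        rw [Finset.sum_eq_single 0]
        · simp
        · intro i hi hne0
          have h1i : 1 ≤ i := by omega
          have h2i : i < e := Finset.mem_range.mp hi
          have hexp : p ^ (n * i % k) ≠ 1 := by
            have h3 : n * i % k ≠ 0 := hdist i h1i h2i
            have : p ^ (n * i % k) ≥ p ^ 1 := Nat.pow_le_pow_right (by omega) (by omega)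
            simp only [pow_one] at this
            omega
          rw [Polynomial.coeff_C_mul, Polynomial.coeff_X_pow]
          simp [Ne.symm hexp]
        · intro h
          exact absurd (Finset.mem_range.mpr (by omega)) h
      rw [hg0, Polynomial.coeff_zero] at hc1
      exact hx00 hc1.symm
    obtain ⟨c, hy0⟩ := hchoice
    set z := ι c * x₀ with hz
    set y := ∑ i ∈ Finset.range e, z ^ p ^ (n * i) with hy
    have hzK : z ^ q ^ 2 + z ^ q + a * z = 0 := hKmul (ι c) x₀ (hιq c) hx0K
    have hyK : y ^ q ^ 2 + y ^ q + a * y = 0 := by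
      rw [hy]
      exact Finset.sum_induction _ (fun w => w ^ q ^ 2 + w ^ q + a * w = 0)
        hKadd hK0 (fun i _ => hKiter z hzK i)
    have hyQ : y ^ p ^ n = y := by
      have hterm : ∀ i : ℕ, (z ^ p ^ (n * i)) ^ p ^ n = z ^ p ^ (n * (i + 1)) := by
        intro i
        rw [← pow_mul, ← pow_add, Nat.mul_add, Nat.mul_one]
      have h1 : y ^ p ^ n = ∑ i ∈ Finset.range e, z ^ p ^ (n * (i + 1)) := by
        rw [hy, sum_pow_char_pow]
        exact Finset.sum_congr rfl (fun i _ => hterm i)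
      have h2 : ∑ i ∈ Finset.range (e + 1), z ^ p ^ (n * i)
          = (∑ i ∈ Finset.range e, z ^ p ^ (n * (i + 1))) + z ^ p ^ (n * 0) := by
        exact Finset.sum_range_succ' _ e
      have h3 : ∑ i ∈ Finset.range (e + 1), z ^ p ^ (n * i)
          = (∑ i ∈ Finset.range e, z ^ p ^ (n * i)) + z ^ p ^ (n * e) := by
        exact Finset.sum_range_succ _ e
      have hze : z ^ p ^ (n * e) = z := hKfix z hzK
      have hz0' : z ^ p ^ (n * 0) = z := by simp
      rw [hze] at h3
      rw [hz0'] at h2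
      rw [h1]
      have : (∑ i ∈ Finset.range e, z ^ p ^ (n * (i + 1))) + z = y + z := by
        rw [← h2, h3, hy]
      exact add_right_cancel this
    exact ⟨y, by rw [hQ]; exact hyQ, hy0, hyK⟩
end

section
/- Let s = (q^m - 1)(p^d - 1)/((Q - 1)(q - 1)), which is a positive integer. Let a ∈ GF(Q)* with A_m(a) = 0 and let x_0 in the algebraic closure of GF(p) satisfy F_1(x_0) = 0. Then F_1(x_0^s) = 0 and (x_0^s)^{q-1} ∈ GF(Q). -/
open Polynomial Finset

/-!
On the roots `v` of the `q`-polynomial `L = X^{q²} + X^q + aX` one has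
`v^{q^r} = A_r(a) v^q + B_r v`, so `A_m(a) = 0` gives `v^{q^m} = B_m v` for all `q²` roots of `L`
(distinct, since `L' = a`). Raising `v^{q²} = -v^q - av` to the power `q^m` then shows that every
root satisfies `(B_m^q - B_m^{q²}) v^q + c v = 0`; a nonzero polynomial of degree `q` has too few
roots, so `B_m^{q²} = B_m^q`, i.e. `B_m ∈ GF(q)`. As `a ∈ GF(Q)`, also `B_m ∈ GF(Q)`, hence
`B_m ∈ GF(p^d)`.

With `t = p^d`, `K = k/d`, the integer `s` satisfies `s · ∑_{i<K} t^i = ∑_{i<K} t^{mi}`, and since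
`i ↦ mi mod K` permutes `{0, …, K-1}` the two sums agree modulo `t^K - 1 = (t - 1) ∑_{i<K} t^i`;
thus `s ≡ 1 mod p^d - 1` and `B_m^s = B_m`. Both claims follow from `x_0^{q^m - 1} = B_m`.
-/

theorem Finset.sum_range_mul_mod {M : Type*} [AddCommMonoid M] (f : ℕ → M) {m K : ℕ}
    (hmK : m.Coprime K) : ∑ i ∈ range K, f (m * i % K) = ∑ i ∈ range K, f i := by
  rcases K.eq_zero_or_pos with rfl | hK
  · simp
  have hmaps : Set.MapsTo (fun i ↦ m * i % K) (range K : Set ℕ) (range K) := fun i _ ↦ by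
    simpa using Nat.mod_lt _ hK
  have hinj : Set.InjOn (fun i ↦ m * i % K) (range K : Set ℕ) := fun i hi j hj hij ↦ by
    simp only [coe_range, Set.mem_Iio] at hi hj
    exact (Nat.ModEq.cancel_left_of_coprime hmK.symm hij).eq_of_lt_of_lt hi hj
  exact sum_nbij _ hmaps hinj (surjOn_of_injOn_of_card_le _ hmaps hinj le_rfl) fun _ _ ↦ rfl

theorem Nat.geom_sum_pow_modEq {t K m : ℕ} (ht : 1 ≤ t) (hmK : m.Coprime K) :
    ∑ i ∈ range K, (t ^ m) ^ i ≡ ∑ i ∈ range K, t ^ i [MOD t ^ K - 1] := by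
  rw [← ZMod.natCast_eq_natCast_iff]
  have hone : (t : ZMod (t ^ K - 1)) ^ K = 1 := by
    have h := ZMod.natCast_self (t ^ K - 1)
    rwa [Nat.cast_sub (Nat.one_le_pow _ _ ht), Nat.cast_pow, Nat.cast_one, sub_eq_zero] at h
  push_cast
  simp_rw [← pow_mul]
  exact (sum_congr rfl fun i _ ↦ pow_eq_pow_mod _ hone).trans (sum_range_mul_mod (_ ^ ·) hmK)

theorem Nat.modEq_one_of_mul_eq {t K m s : ℕ} (ht : 2 ≤ t) (hK : 0 < K) (hm : 0 < m)
    (hmK : m.Coprime K)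
    (hs : s * ((t ^ m - 1) * (t ^ K - 1)) = (t ^ (K * m) - 1) * (t - 1)) :
    s ≡ 1 [MOD t - 1] := by
  set V := ∑ i ∈ range K, t ^ i
  set U := ∑ i ∈ range K, (t ^ m) ^ i
  have hV : V * (t - 1) = t ^ K - 1 := geom_sum_mul_of_one_le (by omega) K
  have hU : U * (t ^ m - 1) = t ^ (K * m) - 1 := by
    rw [geom_sum_mul_of_one_le (Nat.one_le_pow _ _ (by omega)), ← pow_mul, mul_comm]
  have hsVU : s * V = U := by
    have hpos : 0 < (t ^ m - 1) * (t - 1) :=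
      Nat.mul_pos (Nat.sub_pos_of_lt (Nat.one_lt_pow hm.ne' (by omega))) (by omega)
    refine Nat.eq_of_mul_eq_mul_right hpos ?_
    calc s * V * ((t ^ m - 1) * (t - 1)) = s * ((t ^ m - 1) * (V * (t - 1))) := by ring
      _ = U * (t ^ m - 1) * (t - 1) := by rw [hV, hs, hU]
      _ = U * ((t ^ m - 1) * (t - 1)) := by ring
  have hV0 : V ≠ 0 := (sum_pos (fun i _ ↦ by positivity) (nonempty_range_iff.2 hK.ne')).ne'
  refine Nat.ModEq.mul_left_cancel' hV0 ?_
  rw [mul_comm V s, hsVU, mul_one, hV]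
  exact geom_sum_pow_modEq (by omega) hmK

theorem aeval_pow_char_pow_of_pow_eq_self {p : ℕ} {R : Type*} [CommRing R] [Algebra (ZMod p) R]
    [ExpChar R p] {a : R} {N : ℕ} (ha : a ^ p ^ N = a) (f : (ZMod p)[X]) :
    aeval a f ^ p ^ N = aeval a f := by
  have h := hom_eval₂ f (algebraMap (ZMod p) R) (iterateFrobenius R p N) a
  rwa [Subsingleton.elim ((iterateFrobenius R p N).comp _) (algebraMap (ZMod p) R),
    iterateFrobenius_def, iterateFrobenius_def, ha, ← aeval_def] at h

section Frobenius

variable {p : ℕ} [Fact p.Prime] {F : Type*} [Field F] [CharP F p] {k q : ℕ}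

theorem pow_pow_eq_iterateFrobenius (hq : q = p ^ k) (j : ℕ) (x : F) :
    x ^ q ^ j = iterateFrobenius F p (k * j) x := by
  rw [iterateFrobenius_def, hq, ← pow_mul]

theorem pow_pow_eq_of_trinomial_root (hq : q = p ^ k) {a v : F} {α β : ℕ → F} (hα1 : α 1 = 1)
    (hβ1 : β 1 = 0) (hα : ∀ r, 1 ≤ r → α (r + 1) = β r ^ q - α r ^ q)
    (hβ : ∀ r, 1 ≤ r → β (r + 1) = -a * α r ^ q) (hv : v ^ q ^ 2 + v ^ q + a * v = 0)
    {r : ℕ} (hr : 1 ≤ r) : v ^ q ^ r = α r * v ^ q + β r * v := by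
  induction r, hr using Nat.le_induction with
  | base => simp [hα1, hβ1]
  | succ r hr ih =>
    have hv2 : v ^ q ^ 2 = -v ^ q - a * v := by linear_combination hv
    have hadd : (α r * v ^ q + β r * v) ^ q = α r ^ q * v ^ q ^ 2 + β r ^ q * v ^ q := by
      rw [hq, add_pow_char_pow, mul_pow, mul_pow, ← hq, ← pow_mul, ← sq]
    rw [pow_succ, pow_mul, ih, hadd, hv2, hα r hr, hβ r hr]
    ring

theorem trinomial_roots_nodup_and_card (hq : q = p ^ k) (hk : 1 ≤ k) [IsAlgClosed F] {a : F}
    (ha : a ≠ 0) :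
    (X ^ q ^ 2 + X ^ q + C a * X : F[X]).roots.Nodup ∧
      Multiset.card (X ^ q ^ 2 + X ^ q + C a * X : F[X]).roots = q ^ 2 := by
  have hq1 : 1 < q := hq ▸ Nat.one_lt_pow (by omega) (Fact.out : p.Prime).one_lt
  have hsep : (X ^ q ^ 2 + X ^ q + C a * X : F[X]).Separable := by
    have hqF : (q : F) = 0 := by rw [hq, Nat.cast_pow, CharP.cast_eq_zero, zero_pow (by omega)]
    have hder : derivative (X ^ q ^ 2 + X ^ q + C a * X : F[X]) = C a := by
      simp [derivative_X_pow, hqF]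
    rw [separable_def, hder]
    exact ⟨0, C a⁻¹, by simp [← C_mul, ha]⟩
  refine ⟨nodup_roots hsep, ?_⟩
  rw [← (IsAlgClosed.splits _).natDegree_eq_card_roots]
  have hqsq : q < q ^ 2 := by nlinarith
  compute_degree!
  · simp [hqsq.ne', hq1.ne']
  all_goals (try constructor) <;> omega

theorem eq_zero_of_forall_trinomial_root (hq : q = p ^ k) (hk : 1 ≤ k) [IsAlgClosed F]
    {a e f : F} (ha : a ≠ 0) (h : ∀ v : F, v ^ q ^ 2 + v ^ q + a * v = 0 → e * v ^ q + f * v = 0) :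
    e = 0 := by
  by_contra he
  have hq1 : 1 < q := hq ▸ Nat.one_lt_pow (by omega) (Fact.out : p.Prime).one_lt
  obtain ⟨hnodup, hcard⟩ := trinomial_roots_nodup_and_card hq hk ha
  have hL0 : (X ^ q ^ 2 + X ^ q + C a * X : F[X]) ≠ 0 := by
    intro h0
    rw [h0, roots_zero, Multiset.card_zero] at hcard
    exact absurd hcard.symm (by positivity)
  have hPdeg : (C e * X ^ q + C f * X).natDegree = q := by
    compute_degree!
    · simp [he, hq1.ne']
    all_goals omega
  have hP0 : C e * X ^ q + C f * X ≠ 0 := by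
    intro h0; rw [h0, natDegree_zero] at hPdeg; omega
  have hle : (X ^ q ^ 2 + X ^ q + C a * X).roots ≤ (C e * X ^ q + C f * X).roots := by
    refine (Multiset.le_iff_subset hnodup).2 fun v hv ↦ (mem_roots hP0).2 ?_
    simpa using h v (by simpa using (mem_roots hL0).1 hv)
  have := (Multiset.card_le_card hle).trans ((card_roots' _).trans hPdeg.le)
  nlinarith

theorem pow_eq_self_of_forall_trinomial_root (hq : q = p ^ k) (hk : 1 ≤ k) [IsAlgClosed F]
    {a b : F} (ha : a ≠ 0) {m : ℕ} (h : ∀ v : F, v ^ q ^ 2 + v ^ q + a * v = 0 → v ^ q ^ m = b * v) :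
    b ^ q = b := by
  have hφ := pow_pow_eq_iterateFrobenius (F := F) hq
  have key : b ^ q - b ^ q ^ 2 = 0 := by
    refine eq_zero_of_forall_trinomial_root hq hk (f := a ^ q ^ m * b - a * b ^ q ^ 2) ha
      fun v hv ↦ ?_
    have hv2 : v ^ q ^ 2 = -v ^ q - a * v := by linear_combination hv
    have hvq : (v ^ q) ^ q ^ m = b ^ q * v ^ q := by rw [pow_right_comm, h v hv, mul_pow]
    have hexp : b ^ q ^ 2 * (-v ^ q - a * v) = -(b ^ q * v ^ q) - a ^ q ^ m * (b * v) :=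
      calc b ^ q ^ 2 * (-v ^ q - a * v) = (v ^ q ^ 2) ^ q ^ m := by
            rw [pow_right_comm, h v hv, mul_pow, hv2]
        _ = (-v ^ q - a * v) ^ q ^ m := by rw [hv2]
        _ = -(b ^ q * v ^ q) - a ^ q ^ m * (b * v) := by
            rw [hφ, map_sub, map_neg, map_mul, ← hφ, ← hφ, ← hφ, hvq, h v hv]
    linear_combination hexp
  have hqq : (b ^ q) ^ q = b ^ q := by rw [← pow_mul, ← sq]; linear_combination -key
  exact iterateFrobenius_inj F p k (by simpa only [iterateFrobenius_def, ← hq] using hqq)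

theorem aeval_A_succ [Algebra (ZMod p) F] (hq : q = p ^ k) {A : ℕ → (ZMod p)[X]}
    (hA1 : A 1 = 1) (hA2 : A 2 = -1)
    (hA : ∀ r : ℕ, 1 ≤ r → A (r + 2) = -(A (r + 1)) ^ q - X ^ q * A r ^ q ^ 2)
    {a : F} {B : ℕ → F} (hB1 : B 1 = 0)
    (hB : ∀ r : ℕ, 1 ≤ r → B (r + 1) = -a * (aeval a (A r)) ^ q) :
    ∀ r, 1 ≤ r → aeval a (A (r + 1)) = B r ^ q - aeval a (A r) ^ q
  | 1, _ => by simp [hA1, hA2, hB1, hq, (Fact.out : p.Prime).ne_zero]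
  | r + 2, _ => by
    rw [hA (r + 1) le_add_self, hB (r + 1) le_add_self]
    simp only [map_sub, map_neg, map_mul, map_pow, aeval_X]
    rw [neg_mul, neg_pow, mul_pow, ← pow_mul, ← sq, hq, neg_one_pow_char_pow]
    ring

theorem B_pow_char_pow_eq_self [Algebra (ZMod p) F] {n : ℕ} {A : ℕ → (ZMod p)[X]} {a : F}
    (haQ : a ^ p ^ n = a) {B : ℕ → F} (hB1 : B 1 = 0)
    (hB : ∀ r : ℕ, 1 ≤ r → B (r + 1) = -a * (aeval a (A r)) ^ q) :
    ∀ r, 1 ≤ r → B r ^ p ^ n = B r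
  | 1, _ => by simp [hB1, (Fact.out : p.Prime).ne_zero]
  | r + 2, _ => by
    rw [hB (r + 1) le_add_self, neg_mul, neg_pow, mul_pow, neg_one_pow_char_pow, haQ,
      pow_right_comm, aeval_pow_char_pow_of_pow_eq_self haQ, neg_one_mul]

theorem B_pow_eq_self_of_aeval_A_eq_zero [Algebra (ZMod p) F] [IsAlgClosed F] (hq : q = p ^ k)
    (hk : 1 ≤ k) {A : ℕ → (ZMod p)[X]} (hA1 : A 1 = 1) (hA2 : A 2 = -1)
    (hA : ∀ r : ℕ, 1 ≤ r → A (r + 2) = -(A (r + 1)) ^ q - X ^ q * A r ^ q ^ 2)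
    {a : F} (ha : a ≠ 0) {B : ℕ → F} (hB1 : B 1 = 0)
    (hB : ∀ r : ℕ, 1 ≤ r → B (r + 1) = -a * (aeval a (A r)) ^ q) {m : ℕ} (hm : 1 ≤ m)
    (hma : aeval a (A m) = 0) : B m ^ q = B m :=
  pow_eq_self_of_forall_trinomial_root hq hk ha fun v hv ↦ by
    simpa [hma] using pow_pow_eq_of_trinomial_root hq (α := fun r ↦ aeval a (A r))
      (by simp [hA1]) hB1 (aeval_A_succ hq hA1 hA2 hA hB1 hB) hB hv hm

end Frobenius

theorem Nat.modEq_one_of_mul_eq_gcd {t n k s : ℕ} (ht : 2 ≤ t) (hn : 0 < n) (hk : 0 < k)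
    (hs : s * ((t ^ n - 1) * (t ^ k - 1)) = ((t ^ k) ^ (n / n.gcd k) - 1) * (t ^ n.gcd k - 1)) :
    s ≡ 1 [MOD t ^ n.gcd k - 1] := by
  have hd : 0 < n.gcd k := Nat.gcd_pos_of_pos_left k hn
  have hn' : t ^ n = (t ^ n.gcd k) ^ (n / n.gcd k) := by
    rw [← pow_mul, Nat.mul_div_cancel' (Nat.gcd_dvd_left n k)]
  have hk' : t ^ k = (t ^ n.gcd k) ^ (k / n.gcd k) := by
    rw [← pow_mul, Nat.mul_div_cancel' (Nat.gcd_dvd_right n k)]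
  rw [hn', hk', ← pow_mul (t ^ n.gcd k) (k / n.gcd k)] at hs
  exact modEq_one_of_mul_eq (ht.trans (Nat.le_self_pow hd.ne' t))
    (Nat.div_pos (Nat.le_of_dvd hk (Nat.gcd_dvd_right n k)) hd)
    (Nat.div_pos (Nat.le_of_dvd hn (Nat.gcd_dvd_left n k)) hd) (Nat.coprime_div_gcd_div_gcd hd) hs

theorem pow_sub_one_eq_one_of_pow_eq_self {G₀ : Type*} [GroupWithZero G₀] {b : G₀}
    {N : ℕ} (hb : b ≠ 0) (hN : N ≠ 0) (h : b ^ N = b) : b ^ (N - 1) = 1 :=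
  mul_right_cancel₀ hb (by rw [pow_sub_one_mul hN, h, one_mul])

theorem pow_pow_gcd_sub_one_eq_one_s17 {G₀ : Type*} [GroupWithZero G₀] {b : G₀} {t n k : ℕ}
    (hb : b ≠ 0) (ht : t ≠ 0) (hn : b ^ t ^ n = b) (hk : b ^ t ^ k = b) :
    b ^ (t ^ n.gcd k - 1) = 1 := by
  rw [← Nat.pow_sub_one_gcd_pow_sub_one]
  exact pow_gcd_eq_one.2 ⟨pow_sub_one_eq_one_of_pow_eq_self hb (pow_ne_zero _ ht) hn,
    pow_sub_one_eq_one_of_pow_eq_self hb (pow_ne_zero _ ht) hk⟩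

theorem pow_pow_eq_mul_and_pow_eq_one {K : Type*} [CommGroupWithZero K] {x b : K} {M N e s : ℕ}
    (hx : x ≠ 0) (hM : M ≠ 0) (hxM : x ^ M = b * x) (hb : b ^ e = 1) (hs : s ≡ 1 [MOD e])
    (hsN : s * N = (M - 1) * e) : (x ^ s) ^ M = b * x ^ s ∧ (x ^ s) ^ N = 1 := by
  have hxb : x ^ (M - 1) = b := mul_right_cancel₀ hx (by rw [pow_sub_one_mul hM, hxM])
  have hbs : b ^ s = b := by rw [pow_eq_pow_mod s hb, hs, ← pow_eq_pow_mod 1 hb, pow_one]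
  refine ⟨by rw [pow_right_comm, hxM, mul_pow, hbs], ?_⟩
  rw [← pow_mul, hsN, pow_mul, hxb, hb]

theorem stmt_17 (p k n : ℕ) [Fact p.Prime] (hk : 1 ≤ k) (hn : 1 ≤ n)
    (d m q Q : ℕ) (hd : d = Nat.gcd n k) (hm : m = n / d)
    (hq : q = p ^ k) (hQ : Q = p ^ n)
    (s : ℕ) (hs : s * ((Q - 1) * (q - 1)) = (q ^ m - 1) * (p ^ d - 1))
    (A : ℕ → Polynomial (ZMod p)) (hA1 : A 1 = 1) (hA2 : A 2 = -1)
    (hA : ∀ r : ℕ, 1 ≤ r → A (r + 2) = -(A (r + 1)) ^ q - X ^ q * A r ^ q ^ 2)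
    (a : AlgebraicClosure (ZMod p)) (haQ : a ^ Q = a) (ha0 : a ≠ 0)
    (B : ℕ → AlgebraicClosure (ZMod p)) (hB1 : B 1 = 0)
    (hB : ∀ r : ℕ, 1 ≤ r → B (r + 1) = -a * (aeval a (A r)) ^ q)
    (hma : aeval a (A m) = 0)
    (x0 : AlgebraicClosure (ZMod p))
    (hx0 : x0 ^ q ^ m - B m * x0 = 0) :
    (x0 ^ s) ^ q ^ m - B m * x0 ^ s = 0 ∧
      ((x0 ^ s) ^ (q - 1)) ^ Q = (x0 ^ s) ^ (q - 1) := by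
  subst hq hQ hd hm
  have hp : p.Prime := Fact.out
  have hd0 : 0 < n.gcd k := Nat.gcd_pos_of_pos_left k hn
  have hm1 : 1 ≤ n / n.gcd k := Nat.div_pos (Nat.le_of_dvd hn (Nat.gcd_dvd_left n k)) hd0
  have hq1 : 1 < p ^ k := Nat.one_lt_pow (by omega) hp.one_lt
  have hM0 : (p ^ k) ^ (n / n.gcd k) ≠ 0 := pow_ne_zero _ (pow_ne_zero _ hp.ne_zero)
  rcases eq_or_ne x0 0 with rfl | hx0ne
  · have hs0 : s ≠ 0 := by
      rintro rfl
      have := Nat.mul_pos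
        (Nat.sub_pos_of_lt (Nat.one_lt_pow (Nat.one_le_iff_ne_zero.1 hm1) hq1))
        (Nat.sub_pos_of_lt (Nat.one_lt_pow hd0.ne' hp.one_lt))
      omega
    simp [hs0, hp.ne_zero, (Nat.sub_pos_of_lt hq1).ne']
  have hx : x0 ^ (p ^ k) ^ (n / n.gcd k) = B (n / n.gcd k) * x0 := sub_eq_zero.1 hx0
  have hB0 : B (n / n.gcd k) ≠ 0 := fun h0 ↦
    hx0ne <| (pow_eq_zero_iff hM0).1 (by rw [hx, h0, zero_mul])
  have hBd := pow_pow_gcd_sub_one_eq_one_s17 hB0 hp.ne_zero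
    (B_pow_char_pow_eq_self haQ hB1 hB _ hm1)
    (B_pow_eq_self_of_aeval_A_eq_zero rfl hk hA1 hA2 hA ha0 hB1 hB hm1 hma)
  have hsmod := Nat.modEq_one_of_mul_eq_gcd hp.two_le hn hk (by rwa [mul_comm (p ^ n - 1)] at hs)
  obtain ⟨h1, h2⟩ := pow_pow_eq_mul_and_pow_eq_one (N := (p ^ k - 1) * (p ^ n - 1)) hx0ne
    hM0 hx hBd hsmod (by rw [← hs]; ring)
  refine ⟨sub_eq_zero.2 h1, ?_⟩
  rw [← pow_sub_one_mul (pow_ne_zero _ hp.ne_zero), ← pow_mul, h2, one_mul]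
end
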